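/- arXiv:math/0509553 — 2 statements merged into one kernel-verified Lean document; each statement's English description precedes it below -/
import Mathlib

section
/- Let y > 0 satisfy μ̄(y) > 0 and n([y,∞)) > 0. Then the dual Hardy–Littlewood function of μ relative to n is finite at y, with the explicit bound ψ_μ(y) ≤ n([y,∞))⁻¹ · ( (1 − μ̄(y))/μ̄(y) − log μ̄(y) ). -/
/-!
Bound the two parts of `ψ_μ(y)` separately, using that `s ↦ μ̄(s)` and `s ↦ n([s,∞))` are
antitone. On `(0,y)` the integrand is at most `(μ̄(y) n([y,∞)))⁻¹` and `μ((0,y)) ≤ 1 − μ̄(y)`.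
Since `μ̄(s+) ≥ μ̄(t)` for `s < t`, the jumps `log μ̄(s) − log μ̄(s+)` over any finite set of
atoms below `y` telescope to at most `log μ(ℝ) − log μ̄(y) = −log μ̄(y)`.
-/

open MeasureTheory Filter
open scoped ENNReal Topology Classical

/-- Topological support of a Borel measure on ℝ. -/
def measSupport (μ : MeasureTheory.Measure ℝ) : Set ℝ :=
  {x | ∀ U : Set ℝ, IsOpen U → x ∈ U → 0 < μ U}

/-- The dual Hardy–Littlewood function `ψ_μ` of `μ` relative to `n`:
`ψ_μ(y) = ∫_{(0,y)} 1_{μ({s})=0} [μ̄(s)·n([s,∞))]⁻¹ dμ(s)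
          + Σ_{0<s<y, μ({s})>0} log(μ̄(s)/μ̄(s+)) / n([s,∞))`,
with values in `[0,∞]` (and `ψ_μ(y) = 0` for `y ≤ 0`). -/
noncomputable def dualHL (μ n : MeasureTheory.Measure ℝ) (y : ℝ) : ℝ≥0∞ :=
  (∫⁻ s in Set.Ioo (0 : ℝ) y,
      Set.indicator {t : ℝ | μ {t} = 0}
        (fun t => (μ (Set.Ici t) * n (Set.Ici t))⁻¹) s ∂μ)
  + ∑' s : {t : ℝ // 0 < t ∧ t < y ∧ 0 < μ {t}},
      ENNReal.ofReal
          (Real.log ((μ (Set.Ici (s : ℝ))).toReal / (μ (Set.Ioi (s : ℝ))).toReal))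
        / n (Set.Ici (s : ℝ))

open Set

section

variable {μ : Measure ℝ}

lemma measureReal_Ioi_pos_of_lt [IsFiniteMeasure μ] {s y : ℝ} (hsy : s < y)
    (hμy : 0 < μ (Ici y)) : 0 < μ.real (Ioi s) :=
  ENNReal.toReal_pos (hμy.trans_le (measure_mono fun _ hx => hsy.trans_le hx)).ne'
    (measure_ne_top μ _)

lemma log_tail_ratio_nonneg [IsFiniteMeasure μ] {s y : ℝ} (hsy : s < y)
    (hμy : 0 < μ (Ici y)) : 0 ≤ Real.log (μ.real (Ici s) / μ.real (Ioi s)) :=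
  Real.log_nonneg <| (one_le_div (measureReal_Ioi_pos_of_lt hsy hμy)).mpr
    (measureReal_mono Ioi_subset_Ici_self)

lemma sum_log_tail_ratio_le [IsFiniteMeasure μ] (F : Finset ℝ) {y : ℝ}
    (hμy : 0 < μ (Ici y)) (hF : ∀ s ∈ F, s < y) :
    ∑ s ∈ F, Real.log (μ.real (Ici s) / μ.real (Ioi s))
      ≤ Real.log (μ.real univ) - Real.log (μ.real (Ici y)) := by
  classical
  have hy_pos : 0 < μ.real (Ici y) := ENNReal.toReal_pos hμy.ne' (measure_ne_top μ _)
  induction F using Finset.induction_on_max generalizing y with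
  | empty =>
    simpa using Real.log_le_log hy_pos (measureReal_mono (subset_univ _))
  | insert b F hF_lt ih =>
    have hby : b < y := hF b (Finset.mem_insert_self b F)
    have hμb : 0 < μ (Ici b) := hμy.trans_le (measure_mono (Ici_subset_Ici.mpr hby.le))
    have hIoi_pos := measureReal_Ioi_pos_of_lt hby hμy
    have hIci_pos : 0 < μ.real (Ici b) :=
      hIoi_pos.trans_le (measureReal_mono Ioi_subset_Ici_self)
    have hjump : Real.log (μ.real (Ici y)) ≤ Real.log (μ.real (Ioi b)) :=
      Real.log_le_log hy_pos (measureReal_mono fun _ hx => hby.trans_le hx)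
    rw [Finset.sum_insert (fun h => (hF_lt b h).false), Real.log_div hIci_pos.ne' hIoi_pos.ne']
    linarith [ih hμb hF_lt hIci_pos]

lemma tsum_ofReal_log_tail_ratio_le [IsFiniteMeasure μ] {p : ℝ → Prop} {y : ℝ}
    (hμy : 0 < μ (Ici y)) (hp : ∀ t, p t → t < y) :
    ∑' s : {t // p t}, ENNReal.ofReal (Real.log (μ.real (Ici s) / μ.real (Ioi s)))
      ≤ ENNReal.ofReal (Real.log (μ.real univ) - Real.log (μ.real (Ici y))) := by
  refine ENNReal.summable.tsum_le_of_sum_le fun F => ?_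
  rw [← ENNReal.ofReal_sum_of_nonneg fun s _ => log_tail_ratio_nonneg (hp s.1 s.2) hμy]
  refine ENNReal.ofReal_le_ofReal ?_
  have hbound := sum_log_tail_ratio_le (F.map (Function.Embedding.subtype p)) hμy fun t ht => by
    obtain ⟨s, -, rfl⟩ := Finset.mem_map.mp ht
    exact hp s s.2
  rwa [Finset.sum_map] at hbound

lemma dualHL_atomic_part_le [IsProbabilityMeasure μ] (n : Measure ℝ) {y : ℝ}
    (hμy : 0 < μ (Ici y)) :
    ∑' s : {t : ℝ // 0 < t ∧ t < y ∧ 0 < μ {t}},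
        ENNReal.ofReal (Real.log ((μ (Ici (s : ℝ))).toReal / (μ (Ioi (s : ℝ))).toReal))
          / n (Ici (s : ℝ))
      ≤ ENNReal.ofReal (-Real.log (μ (Ici y)).toReal) / n (Ici y) := by
  calc _ ≤ ∑' s : {t : ℝ // 0 < t ∧ t < y ∧ 0 < μ {t}},
          ENNReal.ofReal (Real.log ((μ (Ici (s : ℝ))).toReal / (μ (Ioi (s : ℝ))).toReal))
            * (n (Ici y))⁻¹ :=
        ENNReal.tsum_le_tsum fun s =>
          ENNReal.div_le_div_left (measure_mono (Ici_subset_Ici.mpr s.2.2.1.le)) _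
    _ ≤ _ := by
      rw [ENNReal.tsum_mul_right, ← div_eq_mul_inv]
      refine ENNReal.div_le_div_right ?_ _
      simpa [measureReal_def] using tsum_ofReal_log_tail_ratio_le (μ := μ) hμy fun t ht => ht.2.1

lemma ofReal_one_sub_toReal_div_toReal (a : ENNReal) (ha : 0 < a) (ha_le : a ≤ 1) :
    ENNReal.ofReal ((1 - a.toReal) / a.toReal) = (1 - a) / a := by
  rw [← ENNReal.toReal_one, ← ENNReal.toReal_sub_of_le ha_le ENNReal.one_ne_top,
    ← ENNReal.toReal_div, ENNReal.ofReal_toReal]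
  exact ENNReal.div_ne_top (by finiteness) ha.ne'

lemma dualHL_diffuse_part_le [IsProbabilityMeasure μ] (n : Measure ℝ) {y : ℝ}
    (hμy : 0 < μ (Ici y)) :
    ∫⁻ s in Ioo (0 : ℝ) y,
        indicator {t : ℝ | μ {t} = 0} (fun t => (μ (Ici t) * n (Ici t))⁻¹) s ∂μ
      ≤ ENNReal.ofReal ((1 - (μ (Ici y)).toReal) / (μ (Ici y)).toReal) / n (Ici y) := by
  have hmass : μ (Ioo 0 y) ≤ 1 - μ (Ici y) := by
    rw [← prob_compl_eq_one_sub measurableSet_Ici, compl_Ici]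
    exact measure_mono Ioo_subset_Iio_self
  calc _ ≤ ∫⁻ _ in Ioo (0 : ℝ) y, (μ (Ici y) * n (Ici y))⁻¹ ∂μ :=
        setLIntegral_mono measurable_const fun s hs =>
          (indicator_le_self _ _ s).trans <| ENNReal.inv_le_inv.mpr <|
            mul_le_mul' (measure_mono (Ici_subset_Ici.mpr hs.2.le))
              (measure_mono (Ici_subset_Ici.mpr hs.2.le))
    _ = μ (Ioo 0 y) / (μ (Ici y) * n (Ici y)) := by
      rw [setLIntegral_const, ENNReal.div_eq_inv_mul]
    _ ≤ (1 - μ (Ici y)) / μ (Ici y) / n (Ici y) := by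
      rw [div_eq_mul_inv, ENNReal.mul_inv (Or.inl hμy.ne') (Or.inl (measure_ne_top μ _)),
        ← mul_assoc, ← div_eq_mul_inv, ← div_eq_mul_inv]
      gcongr
    _ = _ := by rw [ofReal_one_sub_toReal_div_toReal _ hμy prob_le_one]

end

theorem dualHL_finite_with_bound_general
    (μ n : MeasureTheory.Measure ℝ) [MeasureTheory.IsProbabilityMeasure μ]
    (y : ℝ)
    (hμy : 0 < μ (Set.Ici y)) (hny : 0 < n (Set.Ici y)) :
    dualHL μ n y < ⊤ ∧
      dualHL μ n y ≤
        (n (Set.Ici y))⁻¹ *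
          ENNReal.ofReal
            ((1 - (μ (Set.Ici y)).toReal) / (μ (Set.Ici y)).toReal
              - Real.log (μ (Set.Ici y)).toReal) := by
  set A := (μ (Set.Ici y)).toReal
  have hA_pos : 0 < A := ENNReal.toReal_pos hμy.ne' (measure_ne_top μ _)
  have hA_le_one : A ≤ 1 := ENNReal.toReal_le_of_le_ofReal zero_le_one (by simpa using prob_le_one)
  have hbound : dualHL μ n y ≤ (n (Set.Ici y))⁻¹ * ENNReal.ofReal ((1 - A) / A - Real.log A) :=
    calc dualHL μ n y
        ≤ ENNReal.ofReal ((1 - A) / A) / n (Set.Ici y)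
          + ENNReal.ofReal (-Real.log A) / n (Set.Ici y) :=
          add_le_add (dualHL_diffuse_part_le n hμy) (dualHL_atomic_part_le n hμy)
      _ = _ := by
        rw [ENNReal.div_add_div_same, ← ENNReal.ofReal_add
          (div_nonneg (by linarith) hA_pos.le) (neg_nonneg.mpr (Real.log_nonpos hA_pos.le hA_le_one)),
          ENNReal.div_eq_inv_mul, sub_eq_add_neg ((1 - A) / A)]
  exact ⟨hbound.trans_lt (ENNReal.mul_lt_top (ENNReal.inv_lt_top.mpr hny) ENNReal.ofReal_lt_top),
    hbound⟩

/-- If `y > 0`, `μ̄(y) > 0` and `n([y,∞)) > 0`, then the dual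
Hardy–Littlewood function of `μ` relative to `n` is finite at `y`, with the explicit
bound `ψ_μ(y) ≤ n([y,∞))⁻¹ · ((1 − μ̄(y))/μ̄(y) − log μ̄(y))`. -/
theorem dualHL_finite_with_bound
    (μ n : MeasureTheory.Measure ℝ) [MeasureTheory.IsProbabilityMeasure μ]
    (hμpos : μ (Set.Ioi (0 : ℝ)) = 1)
    (hnfin : ∀ s : ℝ, 0 < s → n (Set.Ici s) < ⊤)
    (hnsupp : ∀ y ∈ measSupport μ, 0 < n (Set.Ici y))
    (y : ℝ) (hy : 0 < y)
    (hμy : 0 < μ (Set.Ici y)) (hny : 0 < n (Set.Ici y)) :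
    dualHL μ n y < ⊤ ∧
      dualHL μ n y ≤
        (n (Set.Ici y))⁻¹ *
          ENNReal.ofReal
            ((1 - (μ (Set.Ici y)).toReal) / (μ (Set.Ici y)).toReal
              - Real.log (μ (Set.Ici y)).toReal) :=
  dualHL_finite_with_bound_general μ n y hμy hny
end

section
/- The total intensity diverges: ∫₀^∞ [ n((−∞,−φ₋(s)]) + n([φ₊(s),∞)) ] ds = ∞. (Probabilistically, this is the analytic fact guaranteeing that the two-sided stopping time of Theorem 1 is almost surely finite.) -/
open MeasureTheory Filter
open scoped ENNReal Topology Classical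

/-- `D_μ(y) = ∫_{[0,y]} n([s,∞))⁻¹ dμ(s)` for `y ≥ 0` (equal to `0` for `y < 0`). -/
noncomputable def Dmu (μ n : MeasureTheory.Measure ℝ) (y : ℝ) : ℝ≥0∞ :=
  ∫⁻ s in Set.Icc (0 : ℝ) y, (n (Set.Ici s))⁻¹ ∂μ

/-- `G_μ(x) = ∫_{[x,0]} n((−∞,s])⁻¹ dμ(s)` for `x ≤ 0` (equal to `0` for `x > 0`). -/
noncomputable def Gmu (μ n : MeasureTheory.Measure ℝ) (x : ℝ) : ℝ≥0∞ :=
  ∫⁻ s in Set.Icc x (0 : ℝ), (n (Set.Iic s))⁻¹ ∂μ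

/-- The set `{y ≥ 0 : D_μ(y) > v}`; its infimum is the right-continuous inverse
`D_μ⁻¹(v)`, with `D_μ⁻¹(v) = ∞` when the set is empty. -/
def DinvSet (μ n : MeasureTheory.Measure ℝ) (v : ℝ≥0∞) : Set ℝ :=
  {y : ℝ | 0 ≤ y ∧ v < Dmu μ n y}

/-- The set `{x ≤ 0 : G_μ(x) > v}`; its supremum is the right-continuous inverse
`G_μ⁻¹(v)`, with `G_μ⁻¹(v) = −∞` when the set is empty. -/
def GinvSet (μ n : MeasureTheory.Measure ℝ) (v : ℝ≥0∞) : Set ℝ :=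
  {x : ℝ | x ≤ 0 ∧ v < Gmu μ n x}

/-- `μ̄(D_μ⁻¹(v))`, with the convention `μ̄(∞) = 0`. -/
noncomputable def mubarDinv (μ n : MeasureTheory.Measure ℝ) (v : ℝ≥0∞) : ℝ :=
  if (DinvSet μ n v).Nonempty then (μ (Set.Ici (sInf (DinvSet μ n v)))).toReal else 0

/-- `μ̄(G_μ⁻¹(v))`, with the convention `μ̄(−∞) = 1`. -/
noncomputable def mubarGinv (μ n : MeasureTheory.Measure ℝ) (v : ℝ≥0∞) : ℝ :=
  if (GinvSet μ n v).Nonempty then (μ (Set.Ici (sSup (GinvSet μ n v)))).toReal else 1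

/-- `n([D_μ⁻¹(v),∞))`, with the convention that it is `0` when `D_μ⁻¹(v) = ∞`. -/
noncomputable def nDinv (μ n : MeasureTheory.Measure ℝ) (v : ℝ≥0∞) : ℝ≥0∞ :=
  if (DinvSet μ n v).Nonempty then n (Set.Ici (sInf (DinvSet μ n v))) else 0

/-- `n((−∞,G_μ⁻¹(v)])`, with the convention that it is `0` when `G_μ⁻¹(v) = −∞`. -/
noncomputable def nGinv (μ n : MeasureTheory.Measure ℝ) (v : ℝ≥0∞) : ℝ≥0∞ :=
  if (GinvSet μ n v).Nonempty then n (Set.Iic (sSup (GinvSet μ n v))) else 0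

/-- The integrand `[n([s,∞)) · (1 + μ̄(s) − μ̄(G_μ⁻¹(D_μ(s))))]⁻¹` of `ψ₊`. -/
noncomputable def psiPlusIntegrand (μ n : MeasureTheory.Measure ℝ) (s : ℝ) : ℝ≥0∞ :=
  (n (Set.Ici s) *
    ENNReal.ofReal (1 + (μ (Set.Ici s)).toReal - mubarGinv μ n (Dmu μ n s)))⁻¹

/-- `ψ₊(y) = ∫_{[0,y]} [n([s,∞)) · (1 + μ̄(s) − μ̄(G_μ⁻¹(D_μ(s))))]⁻¹ dμ(s)`. -/
noncomputable def psiPlus (μ n : MeasureTheory.Measure ℝ) (y : ℝ) : ℝ≥0∞ :=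
  ∫⁻ s in Set.Icc (0 : ℝ) y, psiPlusIntegrand μ n s ∂μ

/-- The integrand `[n((−∞,s]) · (1 + μ̄(D_μ⁻¹(G_μ(s))) − μ̄(s))]⁻¹` of `ψ₋`. -/
noncomputable def psiMinusIntegrand (μ n : MeasureTheory.Measure ℝ) (s : ℝ) : ℝ≥0∞ :=
  (n (Set.Iic s) *
    ENNReal.ofReal (1 + mubarDinv μ n (Gmu μ n s) - (μ (Set.Ici s)).toReal))⁻¹

/-- `ψ₋(z) = ∫_{[−z,0]} [n((−∞,s]) · (1 + μ̄(D_μ⁻¹(G_μ(s))) − μ̄(s))]⁻¹ dμ(s)`. -/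
noncomputable def psiMinus (μ n : MeasureTheory.Measure ℝ) (z : ℝ) : ℝ≥0∞ :=
  ∫⁻ s in Set.Icc (-z) (0 : ℝ), psiMinusIntegrand μ n s ∂μ

/-- The set `{y ≥ 0 : ψ₊(y) ≥ l}` whose infimum is the left-continuous inverse `φ₊(l)`. -/
def phiPlusSet (μ n : MeasureTheory.Measure ℝ) (l : ℝ) : Set ℝ :=
  {y : ℝ | 0 ≤ y ∧ ENNReal.ofReal l ≤ psiPlus μ n y}

/-- The set `{z ≥ 0 : ψ₋(z) ≥ l}` whose infimum is the left-continuous inverse `φ₋(l)`. -/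
def phiMinusSet (μ n : MeasureTheory.Measure ℝ) (l : ℝ) : Set ℝ :=
  {z : ℝ | 0 ≤ z ∧ ENNReal.ofReal l ≤ psiMinus μ n z}

/-- `φ₊(l) = inf{y ≥ 0 : ψ₊(y) ≥ l}`. -/
noncomputable def phiPlus (μ n : MeasureTheory.Measure ℝ) (l : ℝ) : ℝ :=
  sInf (phiPlusSet μ n l)

/-- `φ₋(l) = inf{z ≥ 0 : ψ₋(z) ≥ l}`. -/
noncomputable def phiMinus (μ n : MeasureTheory.Measure ℝ) (l : ℝ) : ℝ :=
  sInf (phiMinusSet μ n l)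

/-- `n([φ₊(l),∞))`, with the convention that it is `0` when `φ₊(l) = inf ∅ = ∞`. -/
noncomputable def nPhiPlus (μ n : MeasureTheory.Measure ℝ) (l : ℝ) : ℝ≥0∞ :=
  if (phiPlusSet μ n l).Nonempty then n (Set.Ici (phiPlus μ n l)) else 0

/-- `n((−∞,−φ₋(l)])`, with the convention that it is `0` when `φ₋(l) = inf ∅ = ∞`. -/
noncomputable def nPhiMinus (μ n : MeasureTheory.Measure ℝ) (l : ℝ) : ℝ≥0∞ :=
  if (phiMinusSet μ n l).Nonempty then n (Set.Iic (-(phiMinus μ n l))) else 0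

/-- `∫₀^L [n((−∞,−φ₋(s)]) + n([φ₊(s),∞))] ds` for an upper limit `L ∈ [0,∞]`. -/
noncomputable def cutInt (μ n : MeasureTheory.Measure ℝ) (L : ℝ≥0∞) : ℝ≥0∞ :=
  ∫⁻ s in {s : ℝ | 0 < s ∧ ENNReal.ofReal s < L},
    (nPhiMinus μ n s + nPhiPlus μ n s)

/-- `exp(−a)` for `a ∈ [0,∞]`, with `exp(−∞) = 0`. -/
noncomputable def expNegE (a : ℝ≥0∞) : ℝ :=
  if a = ⊤ then 0 else Real.exp (-a.toReal)

/-- `ρ(l) = exp(−∫₀^l [n((−∞,−φ₋(s)]) + n([φ₊(s),∞))] ds)`. -/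
noncomputable def rho (μ n : MeasureTheory.Measure ℝ) (l : ℝ) : ℝ≥0∞ :=
  ENNReal.ofReal (expNegE (cutInt μ n (ENNReal.ofReal l)))

section Aux

open Set

variable {μ n : MeasureTheory.Measure ℝ}

lemma measSupport_compl_null (μ : MeasureTheory.Measure ℝ) : μ ((measSupport μ)ᶜ) = 0 := by
  have hCnull : μ (⋃ (p : ℚ × ℚ) (_ : μ (Ioo (p.1 : ℝ) (p.2 : ℝ)) = 0),
      Ioo (p.1 : ℝ) (p.2 : ℝ)) = 0 :=
    measure_iUnion_null fun p => measure_iUnion_null fun h => h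
  refine measure_mono_null ?_ hCnull
  intro x hx
  simp only [mem_compl_iff, measSupport, mem_setOf_eq, not_forall] at hx
  obtain ⟨U, hU, hxU, hμU⟩ := hx
  have hμU0 : μ U = 0 := by
    have := le_zero_iff.mp (not_lt.mp hμU)
    simpa using this
  obtain ⟨ε, hε, hball⟩ := Metric.isOpen_iff.mp hU x hxU
  rw [Real.ball_eq_Ioo] at hball
  obtain ⟨q1, hq1, hq1'⟩ := exists_rat_btwn (show x - ε < x by linarith)
  obtain ⟨q2, hq2, hq2'⟩ := exists_rat_btwn (show x < x + ε by linarith)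
  have hsub : Ioo (q1 : ℝ) (q2 : ℝ) ⊆ U := fun y hy =>
    hball ⟨lt_trans hq1 hy.1, lt_trans hy.2 hq2'⟩
  have : μ (Ioo (q1 : ℝ) (q2 : ℝ)) = 0 :=
    measure_mono_null hsub hμU0
  exact mem_iUnion.mpr ⟨(q1, q2), mem_iUnion.mpr ⟨this, ⟨hq1', hq2⟩⟩⟩

lemma null_of_setLIntegral_zero {f : ℝ → ℝ≥0∞} (hf : Measurable f) {E : Set ℝ}
    (hE : MeasurableSet E) (hpos : ∀ x ∈ E, f x ≠ 0)
    (h : ∫⁻ x in E, f x ∂μ = 0) : μ E = 0 := by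
  rw [MeasureTheory.lintegral_eq_zero_iff hf] at h
  have h2 : ∀ᵐ x ∂μ, x ∈ E → f x = 0 := (MeasureTheory.ae_restrict_iff' hE).mp h
  refine measure_mono_null (fun x hx => ?_) (MeasureTheory.ae_iff.mp h2)
  exact fun hcon => hpos x hx (hcon hx)

lemma meas_nIci (n : MeasureTheory.Measure ℝ) : Measurable fun s : ℝ => n (Set.Ici s) :=
  Antitone.measurable fun a b hab => measure_mono (Ici_subset_Ici.mpr hab)

lemma meas_nIic (n : MeasureTheory.Measure ℝ) : Measurable fun s : ℝ => n (Set.Iic s) :=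
  Monotone.measurable fun a b hab => measure_mono (Iic_subset_Iic.mpr hab)

lemma Dmu_mono : Monotone (Dmu μ n) := fun a b hab =>
  MeasureTheory.lintegral_mono_set (Icc_subset_Icc le_rfl hab)

lemma Gmu_anti : Antitone (Gmu μ n) := fun a b hab =>
  MeasureTheory.lintegral_mono_set (Icc_subset_Icc hab le_rfl)

lemma psiPlus_mono : Monotone (psiPlus μ n) := fun a b hab =>
  MeasureTheory.lintegral_mono_set (Icc_subset_Icc le_rfl hab)

lemma psiMinus_mono : Monotone (psiMinus μ n) := fun a b hab =>
  MeasureTheory.lintegral_mono_set (Icc_subset_Icc (neg_le_neg hab) le_rfl)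

lemma mubarGinv_mono [MeasureTheory.IsProbabilityMeasure μ] :
    Monotone (mubarGinv μ n) := by
  intro v v' hvv'
  unfold mubarGinv
  have hsub : GinvSet μ n v' ⊆ GinvSet μ n v := fun x hx => ⟨hx.1, lt_of_le_of_lt hvv' hx.2⟩
  by_cases h' : (GinvSet μ n v').Nonempty
  · rw [if_pos h', if_pos (h'.mono hsub)]
    have hba : BddAbove (GinvSet μ n v) := ⟨0, fun x hx => hx.1⟩
    have := csSup_le_csSup hba h' hsub
    exact ENNReal.toReal_mono (MeasureTheory.measure_ne_top μ _)
      (measure_mono (Ici_subset_Ici.mpr this))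
  · rw [if_neg h']
    split
    · exact le_trans (ENNReal.toReal_mono ENNReal.one_ne_top MeasureTheory.prob_le_one) le_rfl
    · exact le_rfl

lemma mubarDinv_anti [MeasureTheory.IsProbabilityMeasure μ] :
    Antitone (mubarDinv μ n) := by
  intro v v' hvv'
  unfold mubarDinv
  have hsub : DinvSet μ n v' ⊆ DinvSet μ n v := fun x hx => ⟨hx.1, lt_of_le_of_lt hvv' hx.2⟩
  by_cases h' : (DinvSet μ n v').Nonempty
  · rw [if_pos h', if_pos (h'.mono hsub)]
    have hbb : BddBelow (DinvSet μ n v) := ⟨0, fun x hx => hx.1⟩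
    have := csInf_le_csInf hbb h' hsub
    exact ENNReal.toReal_mono (MeasureTheory.measure_ne_top μ _)
      (measure_mono (Ici_subset_Ici.mpr this))
  · rw [if_neg h']
    split
    · exact ENNReal.toReal_nonneg
    · exact le_rfl

lemma mubarGinv_nonneg (v : ℝ≥0∞) : 0 ≤ mubarGinv μ n v := by
  unfold mubarGinv; split
  · exact ENNReal.toReal_nonneg
  · exact zero_le_one

lemma mubarDinv_nonneg (v : ℝ≥0∞) : 0 ≤ mubarDinv μ n v := by
  unfold mubarDinv; split
  · exact ENNReal.toReal_nonneg
  · exact le_rfl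

lemma mubarGinv_le_one [MeasureTheory.IsProbabilityMeasure μ] (v : ℝ≥0∞) :
    mubarGinv μ n v ≤ 1 := by
  unfold mubarGinv; split
  · exact ENNReal.toReal_mono ENNReal.one_ne_top MeasureTheory.prob_le_one
  · exact le_rfl

lemma mubarDinv_le_one [MeasureTheory.IsProbabilityMeasure μ] (v : ℝ≥0∞) :
    mubarDinv μ n v ≤ 1 := by
  unfold mubarDinv; split
  · exact ENNReal.toReal_mono ENNReal.one_ne_top MeasureTheory.prob_le_one
  · exact zero_le_one

lemma meas_pIplus [MeasureTheory.IsProbabilityMeasure μ] :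
    Measurable (psiPlusIntegrand μ n) := by
  have h1 : Antitone fun s : ℝ =>
      1 + (μ (Set.Ici s)).toReal - mubarGinv μ n (Dmu μ n s) := by
    intro a b hab
    have h2 : (μ (Set.Ici b)).toReal ≤ (μ (Set.Ici a)).toReal :=
      ENNReal.toReal_mono (MeasureTheory.measure_ne_top μ _)
        (measure_mono (Ici_subset_Ici.mpr hab))
    have h3 : mubarGinv μ n (Dmu μ n a) ≤ mubarGinv μ n (Dmu μ n b) :=
      mubarGinv_mono (Dmu_mono hab)
    dsimp only
    linarith
  exact (((meas_nIci n).mul (ENNReal.measurable_ofReal.comp h1.measurable))).inv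

lemma meas_pIminus [MeasureTheory.IsProbabilityMeasure μ] :
    Measurable (psiMinusIntegrand μ n) := by
  have h1 : Monotone fun s : ℝ =>
      1 + mubarDinv μ n (Gmu μ n s) - (μ (Set.Ici s)).toReal := by
    intro a b hab
    have h2 : (μ (Set.Ici b)).toReal ≤ (μ (Set.Ici a)).toReal :=
      ENNReal.toReal_mono (MeasureTheory.measure_ne_top μ _)
        (measure_mono (Ici_subset_Ici.mpr hab))
    have h3 : mubarDinv μ n (Gmu μ n a) ≤ mubarDinv μ n (Gmu μ n b) :=
      mubarDinv_anti (Gmu_anti hab)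
    dsimp only
    linarith
  exact (((meas_nIic n).mul (ENNReal.measurable_ofReal.comp h1.measurable))).inv

end Aux
section MapLemma

open Set MeasureTheory

/-- generalized left-continuous inverse of `y ↦ κ(Ioc 0 y)` -/
noncomputable def invF (κ : MeasureTheory.Measure ℝ) (l : ℝ) : ℝ :=
  sInf {y : ℝ | 0 ≤ y ∧ ENNReal.ofReal l ≤ κ (Set.Ioc 0 y)}

def domF (κ : MeasureTheory.Measure ℝ) : Set ℝ :=
  {l : ℝ | 0 < l ∧ ENNReal.ofReal l < κ (Set.Ioi 0)}

variable {κ : MeasureTheory.Measure ℝ}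

lemma kIoc_mono : Monotone fun y : ℝ => κ (Set.Ioc 0 y) := fun a b hab =>
  measure_mono (Ioc_subset_Ioc le_rfl hab)

lemma kIoi_eq : κ (Set.Ioi (0:ℝ)) = ⨆ m : ℕ, κ (Set.Ioc 0 (m:ℝ)) := by
  have h : Set.Ioi (0:ℝ) = ⋃ m : ℕ, Set.Ioc (0:ℝ) (m:ℝ) := by
    ext x
    simp only [mem_Ioi, mem_iUnion, mem_Ioc]
    constructor
    · intro hx; obtain ⟨m, hm⟩ := exists_nat_ge x; exact ⟨m, hx, hm⟩
    · rintro ⟨m, hm, _⟩; exact hm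
  rw [h]
  have hmono : Monotone fun m : ℕ => Set.Ioc (0:ℝ) (m:ℝ) := by
    intro a b hab
    exact Ioc_subset_Ioc le_rfl (by exact_mod_cast hab)
  exact Directed.measure_iUnion hmono.directed_le

lemma SF_nonempty {l : ℝ} (hl : l ∈ domF κ) :
    {y : ℝ | 0 ≤ y ∧ ENNReal.ofReal l ≤ κ (Set.Ioc 0 y)}.Nonempty := by
  have h2 := hl.2
  rw [kIoi_eq] at h2
  obtain ⟨m, hm⟩ := lt_iSup_iff.mp h2
  exact ⟨(m : ℝ), Nat.cast_nonneg m, le_of_lt hm⟩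

lemma invF_nonneg (l : ℝ) : 0 ≤ invF κ l := by
  by_cases hne : {y : ℝ | 0 ≤ y ∧ ENNReal.ofReal l ≤ κ (Set.Ioc 0 y)}.Nonempty
  · exact le_csInf hne fun y hy => hy.1
  · rw [invF, Set.not_nonempty_iff_eq_empty.mp hne, Real.sInf_empty]

lemma invF_spec (hfin : ∀ b : ℝ, κ (Set.Ioc (0:ℝ) b) ≠ ⊤) {l : ℝ}
    (hne : {y : ℝ | 0 ≤ y ∧ ENNReal.ofReal l ≤ κ (Set.Ioc 0 y)}.Nonempty) :
    ENNReal.ofReal l ≤ κ (Set.Ioc 0 (invF κ l)) := by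
  set S := {y : ℝ | 0 ≤ y ∧ ENNReal.ofReal l ≤ κ (Set.Ioc 0 y)} with hS
  have key : ∀ m : ℕ, ENNReal.ofReal l ≤ κ (Set.Ioc 0 (invF κ l + 1/(m+1))) := by
    intro m
    have hlt : sInf S < invF κ l + 1/(m+1) := by
      rw [invF, ← hS]; exact lt_add_of_pos_right _ (by positivity)
    obtain ⟨y, hyS, hy⟩ := exists_lt_of_csInf_lt hne hlt
    exact le_trans hyS.2 (kIoc_mono (le_of_lt hy))
  have hinter : ⋂ m : ℕ, Set.Ioc (0:ℝ) (invF κ l + 1/(m+1)) = Set.Ioc 0 (invF κ l) := by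
    ext x
    simp only [mem_iInter, mem_Ioc]
    constructor
    · intro h
      refine ⟨(h 0).1, le_of_forall_pos_le_add fun ε hε => ?_⟩
      obtain ⟨m, hm⟩ := exists_nat_one_div_lt hε
      have := (h m).2
      have hmm : 1/((m:ℝ)+1) ≤ ε := le_of_lt hm
      linarith
    · intro h m
      exact ⟨h.1, le_trans h.2 (le_add_of_nonneg_right (by positivity))⟩
  have hanti : Antitone fun m : ℕ => Set.Ioc (0:ℝ) (invF κ l + 1/(m+1)) := by
    intro a b hab
    refine Ioc_subset_Ioc le_rfl (add_le_add_right ?_ _)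
    have : (a:ℝ) + 1 ≤ (b:ℝ) + 1 := by exact_mod_cast Nat.succ_le_succ hab
    exact one_div_le_one_div_of_le (by positivity) this
  have htend := tendsto_measure_iInter_atTop (μ := κ)
    (fun m => measurableSet_Ioc.nullMeasurableSet) hanti ⟨0, hfin _⟩
  rw [hinter] at htend
  exact ge_of_tendsto htend (Filter.Eventually.of_forall key)

lemma invF_le_iff (hfin : ∀ b : ℝ, κ (Set.Ioc (0:ℝ) b) ≠ ⊤) {l : ℝ} (hl : l ∈ domF κ)
    {b : ℝ} (hb : 0 ≤ b) :
    invF κ l ≤ b ↔ ENNReal.ofReal l ≤ κ (Set.Ioc 0 b) := by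
  constructor
  · intro h
    exact le_trans (invF_spec hfin (SF_nonempty hl)) (kIoc_mono h)
  · intro h
    exact csInf_le ⟨0, fun y hy => hy.1⟩ ⟨hb, h⟩

lemma invF_pos (hfin : ∀ b : ℝ, κ (Set.Ioc (0:ℝ) b) ≠ ⊤) {l : ℝ} (hl : l ∈ domF κ) :
    0 < invF κ l := by
  rcases lt_or_eq_of_le (invF_nonneg (κ := κ) l) with h | h
  · exact h
  · exfalso
    have h2 := invF_spec hfin (SF_nonempty hl)
    rw [← h, Set.Ioc_self, measure_empty, le_zero_iff, ENNReal.ofReal_eq_zero] at h2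
    exact absurd hl.1 (not_lt.mpr h2)

lemma invF_measurable : Measurable (invF κ) := by
  apply measurable_of_Iio
  intro c
  rcases le_or_gt c 0 with hc | hc
  · have : invF κ ⁻¹' Iio c = ∅ := by
      ext l
      simp only [mem_preimage, mem_Iio, mem_empty_iff_false, iff_false, not_lt]
      exact le_trans hc (invF_nonneg l)
    rw [this]; exact MeasurableSet.empty
  · have hA : ∀ q : ℚ, MeasurableSet {l : ℝ | ENNReal.ofReal l ≤ κ (Set.Ioc 0 (q:ℝ))} :=
      fun q => ENNReal.measurable_ofReal (measurableSet_Iic)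
    have hNE : MeasurableSet {l : ℝ |
        {y : ℝ | 0 ≤ y ∧ ENNReal.ofReal l ≤ κ (Set.Ioc 0 y)}.Nonempty} := by
      have : {l : ℝ | {y : ℝ | 0 ≤ y ∧ ENNReal.ofReal l ≤ κ (Set.Ioc 0 y)}.Nonempty}
          = ⋃ (q : ℚ) (_ : 0 ≤ (q:ℝ)), {l : ℝ | ENNReal.ofReal l ≤ κ (Set.Ioc 0 (q:ℝ))} := by
        ext l
        simp only [mem_setOf_eq, mem_iUnion]
        constructor
        · rintro ⟨y, hy0, hyF⟩
          obtain ⟨q, hq1, _⟩ := exists_rat_btwn (lt_add_one y)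
          exact ⟨q, le_trans hy0 (le_of_lt hq1), le_trans hyF (kIoc_mono (le_of_lt hq1))⟩
        · rintro ⟨q, hq0, hql⟩
          exact ⟨(q:ℝ), hq0, hql⟩
      rw [this]
      exact MeasurableSet.iUnion fun q => MeasurableSet.iUnion fun _ => hA q
    have hset : invF κ ⁻¹' Iio c = {l : ℝ |
        {y : ℝ | 0 ≤ y ∧ ENNReal.ofReal l ≤ κ (Set.Ioc 0 y)}.Nonempty}ᶜ ∪
        ⋃ (q : ℚ) (_ : 0 ≤ (q:ℝ) ∧ (q:ℝ) < c),
          {l : ℝ | ENNReal.ofReal l ≤ κ (Set.Ioc 0 (q:ℝ))} := by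
      ext l
      simp only [mem_preimage, mem_Iio, mem_union, mem_compl_iff, mem_setOf_eq, mem_iUnion]
      constructor
      · intro h
        by_cases hne : {y : ℝ | 0 ≤ y ∧ ENNReal.ofReal l ≤ κ (Set.Ioc 0 y)}.Nonempty
        · obtain ⟨y, hyS, hyc⟩ := (csInf_lt_iff ⟨0, fun y hy => hy.1⟩ hne).mp h
          obtain ⟨q, hq1, hq2⟩ := exists_rat_btwn hyc
          exact Or.inr ⟨q, ⟨le_trans hyS.1 (le_of_lt hq1), hq2⟩,
            le_trans hyS.2 (kIoc_mono (le_of_lt hq1))⟩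
        · exact Or.inl hne
      · rintro (hne | ⟨q, ⟨hq0, hqc⟩, hql⟩)
        · rw [invF, Set.not_nonempty_iff_eq_empty.mp hne, Real.sInf_empty]
          exact hc
        · exact lt_of_le_of_lt (csInf_le ⟨0, fun y hy => hy.1⟩ ⟨hq0, hql⟩) hqc
    rw [hset]
    exact (hNE.compl).union
      (MeasurableSet.iUnion fun q => MeasurableSet.iUnion fun _ => hA q)

lemma domF_measurable : MeasurableSet (domF κ) := by
  have : domF κ = Ioi (0:ℝ) ∩ (fun l : ℝ => ENNReal.ofReal l) ⁻¹' (Iio (κ (Set.Ioi 0))) := by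
    ext l
    simp only [domF, mem_setOf_eq, mem_inter_iff, mem_Ioi, mem_preimage, mem_Iio]
  rw [this]
  exact measurableSet_Ioi.inter (ENNReal.measurable_ofReal measurableSet_Iio)

end MapLemma
section MapMain

open Set MeasureTheory

variable {κ : MeasureTheory.Measure ℝ}

theorem map_invF_eq (h0 : κ (Set.Iic (0:ℝ)) = 0)
    (hfin : ∀ b : ℝ, κ (Set.Ioc (0:ℝ) b) ≠ ⊤) :
    MeasureTheory.Measure.map (invF κ) (MeasureTheory.volume.restrict (domF κ)) = κ := by
  set M := Measure.map (invF κ) (volume.restrict (domF κ)) with hM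
  have hfin' : ∀ a b : ℝ, κ (Set.Ioc a b) ≠ ⊤ := by
    intro a b
    have hsub : Set.Ioc a b ⊆ Set.Iic 0 ∪ Set.Ioc 0 b := fun x hx => by
      rcases le_or_gt x 0 with h | h
      · exact Or.inl h
      · exact Or.inr ⟨h, hx.2⟩
    refine fun hcon => hfin b (top_le_iff.mp ?_)
    calc ⊤ = κ (Set.Ioc a b) := hcon.symm
    _ ≤ κ (Set.Iic 0) + κ (Set.Ioc 0 b) := le_trans (measure_mono hsub) (measure_union_le _ _)
    _ = κ (Set.Ioc 0 b) := by rw [h0, zero_add]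
  have hMap : ∀ a b : ℝ, M (Set.Ioc a b) = volume (invF κ ⁻¹' (Set.Ioc a b) ∩ domF κ) := by
    intro a b
    rw [hM, Measure.map_apply invF_measurable measurableSet_Ioc,
      Measure.restrict_apply (invF_measurable measurableSet_Ioc)]
  -- the core computation, for 0 ≤ a < b
  have core : ∀ a b : ℝ, 0 ≤ a → a < b →
      volume (invF κ ⁻¹' (Set.Ioc a b) ∩ domF κ) = κ (Set.Ioc a b) := by
    intro a b ha hab
    have hb' : (0:ℝ) ≤ b := le_trans ha (le_of_lt hab)
    set A := (κ (Set.Ioc 0 a)).toReal with hA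
    set B := (κ (Set.Ioc 0 b)).toReal with hB
    have hA0 : 0 ≤ A := ENNReal.toReal_nonneg
    have hAB : A ≤ B := ENNReal.toReal_mono (hfin b) (kIoc_mono (le_of_lt hab))
    have hset : invF κ ⁻¹' (Set.Ioc a b) ∩ domF κ = Set.Ioc A B ∩ domF κ := by
      ext l
      simp only [mem_inter_iff, mem_preimage, mem_Ioc]
      constructor
      · rintro ⟨⟨h1, h2⟩, hdom⟩
        refine ⟨⟨?_, ?_⟩, hdom⟩
        · by_contra hcon
          have h3 : ENNReal.ofReal l ≤ κ (Set.Ioc 0 a) :=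
            (ENNReal.ofReal_le_iff_le_toReal (hfin a)).mpr (not_lt.mp hcon)
          exact absurd ((invF_le_iff hfin hdom ha).mpr h3) (not_le.mpr h1)
        · exact (ENNReal.ofReal_le_iff_le_toReal (hfin b)).mp
            ((invF_le_iff hfin hdom hb').mp h2)
      · rintro ⟨⟨h1, h2⟩, hdom⟩
        refine ⟨⟨?_, ?_⟩, hdom⟩
        · by_contra hcon
          have h3 := (invF_le_iff hfin hdom ha).mp (not_lt.mp hcon)
          have h4 := (ENNReal.ofReal_le_iff_le_toReal (hfin a)).mp h3
          linarith
        · exact (invF_le_iff hfin hdom hb').mpr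
            ((ENNReal.ofReal_le_iff_le_toReal (hfin b)).mpr h2)
    have hvol : volume (Set.Ioc A B ∩ domF κ) = ENNReal.ofReal (B - A) := by
      by_cases hT : κ (Set.Ioi (0:ℝ)) = ⊤
      · have hdom_eq : domF κ = Set.Ioi (0:ℝ) := by
          ext l
          simp only [domF, mem_setOf_eq, mem_Ioi, hT, ENNReal.ofReal_lt_top, and_true]
        have hinter : Set.Ioc A B ∩ Set.Ioi (0:ℝ) = Set.Ioc A B :=
          Set.inter_eq_left.mpr fun x hx => lt_of_le_of_lt hA0 hx.1
        rw [hdom_eq, hinter, Real.volume_Ioc]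
      · have hdom_eq : domF κ = Set.Ioo 0 (κ (Set.Ioi (0:ℝ))).toReal := by
          ext l
          simp only [domF, mem_setOf_eq, mem_Ioo]
          constructor
          · rintro ⟨h1, h2⟩
            exact ⟨h1, (ENNReal.ofReal_lt_iff_lt_toReal (le_of_lt h1) hT).mp h2⟩
          · rintro ⟨h1, h2⟩
            exact ⟨h1, (ENNReal.ofReal_lt_iff_lt_toReal (le_of_lt h1) hT).mpr h2⟩
        have hBT : B ≤ (κ (Set.Ioi (0:ℝ))).toReal :=
          ENNReal.toReal_mono hT (measure_mono Set.Ioc_subset_Ioi_self)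
        have hsub1 : Set.Ioo A B ⊆ Set.Ioc A B ∩ Set.Ioo 0 (κ (Set.Ioi (0:ℝ))).toReal := by
          intro x hx
          exact ⟨⟨hx.1, le_of_lt hx.2⟩, ⟨lt_of_le_of_lt hA0 hx.1, lt_of_lt_of_le hx.2 hBT⟩⟩
        rw [hdom_eq]
        refine le_antisymm ?_ ?_
        · calc volume (Set.Ioc A B ∩ Set.Ioo 0 (κ (Set.Ioi (0:ℝ))).toReal)
              ≤ volume (Set.Ioc A B) := measure_mono inter_subset_left
          _ = ENNReal.ofReal (B - A) := Real.volume_Ioc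
        · calc ENNReal.ofReal (B - A) = volume (Set.Ioo A B) := Real.volume_Ioo.symm
          _ ≤ _ := measure_mono hsub1
    have hsum : κ (Set.Ioc 0 a) + κ (Set.Ioc a b) = κ (Set.Ioc 0 b) := by
      rw [← measure_union (Set.Ioc_disjoint_Ioc_of_le le_rfl) measurableSet_Ioc,
        Set.Ioc_union_Ioc_eq_Ioc ha (le_of_lt hab)]
    have hκab : ENNReal.ofReal (B - A) = κ (Set.Ioc a b) := by
      have h2 : ENNReal.ofReal (B - A) = ENNReal.ofReal B - ENNReal.ofReal A :=
        ENNReal.ofReal_sub _ ENNReal.toReal_nonneg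
      have h3 : ENNReal.ofReal B = κ (Set.Ioc 0 b) := ENNReal.ofReal_toReal (hfin b)
      have h4 : ENNReal.ofReal A = κ (Set.Ioc 0 a) := ENNReal.ofReal_toReal (hfin a)
      rw [h2, h3, h4, ← hsum, ENNReal.add_sub_cancel_left (hfin a)]
    rw [hset, hvol, hκab]
  -- master computation on all Ioc intervals
  have master : ∀ a b : ℝ, M (Set.Ioc a b) = κ (Set.Ioc a b) := by
    intro a b
    rcases le_or_gt b a with hba | hab
    · rw [Set.Ioc_eq_empty (not_lt.mpr hba)]; simp
    rcases le_or_gt b 0 with hb0 | hb0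
    · have h1 : invF κ ⁻¹' (Set.Ioc a b) ∩ domF κ = ∅ := by
        ext l
        simp only [mem_inter_iff, mem_preimage, mem_Ioc, mem_empty_iff_false, iff_false,
          not_and, and_imp]
        intro _ hlb hdom
        exact absurd (lt_of_lt_of_le (invF_pos hfin hdom) hlb) (not_lt.mpr hb0)
      rw [hMap, h1, measure_empty]
      exact (measure_mono_null (fun x (hx : x ∈ Set.Ioc a b) => le_trans hx.2 hb0) h0).symm
    rcases le_or_gt 0 a with ha0 | ha0
    · rw [hMap]; exact core a b ha0 hab
    · -- a < 0 < b : reduce to Ioc 0 b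
      have hpre : invF κ ⁻¹' (Set.Ioc a b) ∩ domF κ
          = invF κ ⁻¹' (Set.Ioc 0 b) ∩ domF κ := by
        ext l
        simp only [mem_inter_iff, mem_preimage, mem_Ioc]
        constructor
        · rintro ⟨⟨_, h2⟩, hdom⟩
          exact ⟨⟨invF_pos hfin hdom, h2⟩, hdom⟩
        · rintro ⟨⟨h1, h2⟩, hdom⟩
          exact ⟨⟨lt_trans ha0 h1, h2⟩, hdom⟩
      have hκ : κ (Set.Ioc a b) = κ (Set.Ioc 0 b) := by
        refine le_antisymm ?_ (measure_mono (Ioc_subset_Ioc (le_of_lt ha0) le_rfl))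
        rw [← Set.Ioc_union_Ioc_eq_Ioc (le_of_lt ha0) (le_of_lt hb0)]
        calc κ (Set.Ioc a 0 ∪ Set.Ioc 0 b) ≤ κ (Set.Ioc a 0) + κ (Set.Ioc 0 b) :=
              measure_union_le _ _
        _ = κ (Set.Ioc 0 b) := by
              rw [measure_mono_null (fun x (hx : x ∈ Set.Ioc a 0) => hx.2) h0, zero_add]
      rw [hMap, hpre, hκ, core 0 b le_rfl hb0]
  -- conclude via uniqueness on rational Ioo intervals
  have instLF : IsLocallyFiniteMeasure M := by
    constructor
    intro x
    refine ⟨Set.Ioo (x-1) (x+1), Ioo_mem_nhds (by linarith) (by linarith), ?_⟩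
    calc M (Set.Ioo (x-1) (x+1)) ≤ M (Set.Ioc (x-1) (x+1)) :=
          measure_mono Set.Ioo_subset_Ioc_self
    _ = κ (Set.Ioc (x-1) (x+1)) := master _ _
    _ < ⊤ := lt_top_iff_ne_top.mpr (hfin' _ _)
  refine Real.measure_ext_Ioo_rat fun p q => ?_
  rcases le_or_gt (q:ℝ) (p:ℝ) with hqp | hpq
  · rw [Set.Ioo_eq_empty (not_lt.mpr hqp), measure_empty, measure_empty]
  · have hIoo : Set.Ioo (p:ℝ) (q:ℝ) = ⋃ m : ℕ, Set.Ioc (p:ℝ) ((q:ℝ) - 1/(m+1)) := by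
      ext x
      simp only [mem_Ioo, mem_iUnion, mem_Ioc]
      constructor
      · rintro ⟨h1, h2⟩
        obtain ⟨m, hm⟩ := exists_nat_one_div_lt (show (0:ℝ) < q - x by linarith)
        exact ⟨m, h1, by linarith⟩
      · rintro ⟨m, h1, h2⟩
        have : (0:ℝ) < 1/((m:ℝ)+1) := by positivity
        exact ⟨h1, by linarith⟩
    have hmono2 : Monotone fun m : ℕ => Set.Ioc (p:ℝ) ((q:ℝ) - 1/(m+1)) := by
      intro i j hij
      apply Ioc_subset_Ioc le_rfl
      have h1 : (i:ℝ) + 1 ≤ (j:ℝ) + 1 := by exact_mod_cast Nat.succ_le_succ hij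
      have := one_div_le_one_div_of_le (by positivity : (0:ℝ) < (i:ℝ)+1) h1
      linarith
    rw [hIoo, Directed.measure_iUnion hmono2.directed_le,
      Directed.measure_iUnion hmono2.directed_le]
    exact iSup_congr fun m => master _ _

end MapMain
section Connect

open Set MeasureTheory

noncomputable def kplus (μ n : MeasureTheory.Measure ℝ) : MeasureTheory.Measure ℝ :=
  (μ.withDensity (psiPlusIntegrand μ n)).restrict (Set.Ioi 0)

noncomputable def kminus (μ n : MeasureTheory.Measure ℝ) : MeasureTheory.Measure ℝ :=
  MeasureTheory.Measure.map (fun x : ℝ => -x)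
    ((μ.withDensity (psiMinusIntegrand μ n)).restrict (Set.Iio 0))

variable {μ n : MeasureTheory.Measure ℝ}

lemma ennreal_cancel (a W : ℝ≥0∞) (ha0 : a ≠ 0) (hat : a ≠ ⊤) :
    (a * W)⁻¹ * a = W⁻¹ := by
  rw [ENNReal.mul_inv (Or.inl ha0) (Or.inl hat), mul_comm, ← mul_assoc,
    ENNReal.mul_inv_cancel ha0 hat, one_mul]

lemma kplus_Ioc [MeasureTheory.NullSingletonClass μ] (y : ℝ) :
    kplus μ n (Set.Ioc 0 y) = psiPlus μ n y := by
  have hint : Set.Ioc (0:ℝ) y ∩ Set.Ioi 0 = Set.Ioc 0 y :=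
    Set.inter_eq_left.mpr fun x hx => hx.1
  rw [kplus, Measure.restrict_apply measurableSet_Ioc, hint,
    withDensity_apply _ measurableSet_Ioc, psiPlus]
  rcases le_or_gt 0 y with hy | hy
  · exact MeasureTheory.setLIntegral_congr (MeasureTheory.Ioc_ae_eq_Icc)
  · rw [Set.Ioc_eq_empty (by linarith), Set.Icc_eq_empty (by linarith)]

lemma kplus_Iic : kplus μ n (Set.Iic 0) = 0 := by
  rw [kplus, Measure.restrict_apply measurableSet_Iic]
  have : Set.Iic (0:ℝ) ∩ Set.Ioi 0 = ∅ := by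
    ext x; simp only [mem_inter_iff, mem_Iic, mem_Ioi, mem_empty_iff_false, iff_false, not_and,
      not_lt]
    exact fun h => h
  rw [this, measure_empty]

lemma phiPlusSet_eq [MeasureTheory.NullSingletonClass μ] (l : ℝ) :
    {y : ℝ | 0 ≤ y ∧ ENNReal.ofReal l ≤ kplus μ n (Set.Ioc 0 y)} = phiPlusSet μ n l := by
  ext y
  rw [phiPlusSet, Set.mem_setOf_eq, Set.mem_setOf_eq, kplus_Ioc]

lemma invF_kplus [MeasureTheory.NullSingletonClass μ] : invF (kplus μ n) = phiPlus μ n := by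
  funext l
  rw [invF, phiPlus, phiPlusSet_eq]

lemma kminus_Ioc [MeasureTheory.NullSingletonClass μ] (z : ℝ) :
    kminus μ n (Set.Ioc 0 z) = psiMinus μ n z := by
  rw [kminus, Measure.map_apply measurable_neg measurableSet_Ioc]
  have hpre : (fun x : ℝ => -x) ⁻¹' (Set.Ioc 0 z) = Set.Ico (-z) 0 := by
    ext x
    simp only [mem_preimage, mem_Ioc, mem_Ico]
    constructor
    · rintro ⟨h1, h2⟩; constructor <;> linarith
    · rintro ⟨h1, h2⟩; constructor <;> linarith
  have hint : Set.Ico (-z) (0:ℝ) ∩ Set.Iio 0 = Set.Ico (-z) 0 :=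
    Set.inter_eq_left.mpr fun x hx => hx.2
  rw [hpre, Measure.restrict_apply measurableSet_Ico, hint,
    withDensity_apply _ measurableSet_Ico, psiMinus]
  rcases le_or_gt 0 z with hz | hz
  · exact MeasureTheory.setLIntegral_congr (MeasureTheory.Ico_ae_eq_Icc)
  · rw [Set.Ico_eq_empty (by linarith), Set.Icc_eq_empty (by linarith)]

lemma kminus_Iic : kminus μ n (Set.Iic 0) = 0 := by
  rw [kminus, Measure.map_apply measurable_neg measurableSet_Iic]
  have hpre : (fun x : ℝ => -x) ⁻¹' (Set.Iic 0) = Set.Ici 0 := by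
    ext x; simp only [mem_preimage, mem_Iic, mem_Ici]; constructor <;> intro <;> linarith
  rw [hpre, Measure.restrict_apply measurableSet_Ici]
  have : Set.Ici (0:ℝ) ∩ Set.Iio 0 = ∅ := by
    ext x; simp only [mem_inter_iff, mem_Ici, mem_Iio, mem_empty_iff_false, iff_false, not_and,
      not_lt]
    exact fun h => h
  rw [this, measure_empty]

lemma phiMinusSet_eq [MeasureTheory.NullSingletonClass μ] (l : ℝ) :
    {z : ℝ | 0 ≤ z ∧ ENNReal.ofReal l ≤ kminus μ n (Set.Ioc 0 z)} = phiMinusSet μ n l := by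
  ext z
  rw [phiMinusSet, Set.mem_setOf_eq, Set.mem_setOf_eq, kminus_Ioc]

lemma invF_kminus [MeasureTheory.NullSingletonClass μ] : invF (kminus μ n) = phiMinus μ n := by
  funext l
  rw [invF, phiMinus, phiMinusSet_eq]

lemma Jplus_eq [MeasureTheory.NullSingletonClass μ] [MeasureTheory.IsProbabilityMeasure μ]
    (hψ : ∀ y : ℝ, psiPlus μ n y ≠ ⊤) :
    ∫⁻ l in domF (kplus μ n), nPhiPlus μ n l
      = ∫⁻ y in Set.Ioi 0, psiPlusIntegrand μ n y * n (Set.Ici y) ∂μ := by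
  have hfin : ∀ b : ℝ, kplus μ n (Set.Ioc (0:ℝ) b) ≠ ⊤ := fun b => by
    rw [kplus_Ioc]; exact hψ b
  have step1 : ∫⁻ l in domF (kplus μ n), nPhiPlus μ n l
      = ∫⁻ l in domF (kplus μ n), n (Set.Ici (invF (kplus μ n) l)) := by
    refine MeasureTheory.setLIntegral_congr_fun domF_measurable
      (fun l hl => ?_)
    have hne : (phiPlusSet μ n l).Nonempty := by
      rw [← phiPlusSet_eq]; exact SF_nonempty hl
    rw [nPhiPlus, if_pos hne, invF_kplus]
  rw [step1, ← MeasureTheory.lintegral_map (meas_nIci n) invF_measurable,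
    map_invF_eq kplus_Iic hfin, kplus, restrict_withDensity measurableSet_Ioi,
    lintegral_withDensity_eq_lintegral_mul _ meas_pIplus (meas_nIci n)]
  rfl

lemma Jminus_eq [MeasureTheory.NullSingletonClass μ] [MeasureTheory.IsProbabilityMeasure μ]
    (hψ : ∀ z : ℝ, psiMinus μ n z ≠ ⊤) :
    ∫⁻ l in domF (kminus μ n), nPhiMinus μ n l
      = ∫⁻ x in Set.Iio 0, psiMinusIntegrand μ n x * n (Set.Iic x) ∂μ := by
  have hfin : ∀ b : ℝ, kminus μ n (Set.Ioc (0:ℝ) b) ≠ ⊤ := fun b => by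
    rw [kminus_Ioc]; exact hψ b
  have hgm : Measurable fun z : ℝ => n (Set.Iic (-z)) :=
    Antitone.measurable fun a b hab => measure_mono (Iic_subset_Iic.mpr (by linarith))
  have step1 : ∫⁻ l in domF (kminus μ n), nPhiMinus μ n l
      = ∫⁻ l in domF (kminus μ n), n (Set.Iic (-(invF (kminus μ n) l))) := by
    refine MeasureTheory.setLIntegral_congr_fun domF_measurable
      (fun l hl => ?_)
    have hne : (phiMinusSet μ n l).Nonempty := by
      rw [← phiMinusSet_eq]; exact SF_nonempty hl
    rw [nPhiMinus, if_pos hne, invF_kminus]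
  rw [step1, ← MeasureTheory.lintegral_map hgm invF_measurable,
    map_invF_eq kminus_Iic hfin, kminus,
    MeasureTheory.lintegral_map hgm measurable_neg]
  have hsimp : ∫⁻ a, n (Set.Iic (- -a))
        ∂((μ.withDensity (psiMinusIntegrand μ n)).restrict (Set.Iio 0))
      = ∫⁻ a, n (Set.Iic a)
        ∂((μ.withDensity (psiMinusIntegrand μ n)).restrict (Set.Iio 0)) :=
    MeasureTheory.lintegral_congr fun a => by rw [neg_neg]
  rw [hsimp, restrict_withDensity measurableSet_Iio,
    lintegral_withDensity_eq_lintegral_mul _ meas_pIminus (meas_nIic n)]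
  rfl

end Connect
section CancelEasy

open Set MeasureTheory

variable {μ n : MeasureTheory.Measure ℝ}

lemma hsupp_ae (μ : MeasureTheory.Measure ℝ) : ∀ᵐ x ∂μ, x ∈ measSupport μ := by
  rw [MeasureTheory.ae_iff]
  exact measSupport_compl_null μ

lemma Kplus_congr [MeasureTheory.IsProbabilityMeasure μ]
    (hnfin : ∀ s : ℝ, 0 < s → n (Set.Ici s) < ⊤ ∧ n (Set.Iic (-s)) < ⊤)
    (hnsupp : ∀ x ∈ measSupport μ, 0 < n (Set.Iic x) ∧ 0 < n (Set.Ici x)) :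
    ∫⁻ y in Set.Ioi 0, psiPlusIntegrand μ n y * n (Set.Ici y) ∂μ
      = ∫⁻ y in Set.Ioi 0,
          (ENNReal.ofReal (1 + (μ (Set.Ici y)).toReal - mubarGinv μ n (Dmu μ n y)))⁻¹ ∂μ := by
  refine MeasureTheory.lintegral_congr_ae ((MeasureTheory.ae_restrict_iff' measurableSet_Ioi).mpr ?_)
  filter_upwards [hsupp_ae μ] with y hy hy0
  have h0 : n (Set.Ici y) ≠ 0 := (hnsupp y hy).2.ne'
  have ht : n (Set.Ici y) ≠ ⊤ := (hnfin y hy0).1.ne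
  rw [psiPlusIntegrand, ennreal_cancel _ _ h0 ht]

lemma Kminus_congr [MeasureTheory.IsProbabilityMeasure μ]
    (hnfin : ∀ s : ℝ, 0 < s → n (Set.Ici s) < ⊤ ∧ n (Set.Iic (-s)) < ⊤)
    (hnsupp : ∀ x ∈ measSupport μ, 0 < n (Set.Iic x) ∧ 0 < n (Set.Ici x)) :
    ∫⁻ x in Set.Iio 0, psiMinusIntegrand μ n x * n (Set.Iic x) ∂μ
      = ∫⁻ x in Set.Iio 0,
          (ENNReal.ofReal (1 + mubarDinv μ n (Gmu μ n x) - (μ (Set.Ici x)).toReal))⁻¹ ∂μ := by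
  refine MeasureTheory.lintegral_congr_ae ((MeasureTheory.ae_restrict_iff' measurableSet_Iio).mpr ?_)
  filter_upwards [hsupp_ae μ] with x hx hx0
  have h0 : n (Set.Iic x) ≠ 0 := (hnsupp x hx).1.ne'
  have ht : n (Set.Iic x) ≠ ⊤ := by
    have h2 := (hnfin (-x) (by simpa using hx0)).2
    rw [neg_neg] at h2
    exact h2.ne
  rw [psiMinusIntegrand, ennreal_cancel _ _ h0 ht]

lemma divergence_of_point_plus (p : ℝ) (hp0 : 0 ≤ p) (hptop : psiPlus μ n p = ⊤)
    (hppos : 0 < n (Set.Ici p)) :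
    ∫⁻ s in Set.Ioi (0:ℝ), (nPhiMinus μ n s + nPhiPlus μ n s) = ⊤ := by
  have hlow : ∀ s : ℝ, s ∈ Set.Ioi (0:ℝ) →
      n (Set.Ici p) ≤ nPhiMinus μ n s + nPhiPlus μ n s := by
    intro s _
    have hpmem : p ∈ phiPlusSet μ n s := ⟨hp0, by rw [hptop]; exact le_top⟩
    have hne : (phiPlusSet μ n s).Nonempty := ⟨p, hpmem⟩
    have hφ : phiPlus μ n s ≤ p := csInf_le ⟨0, fun y hy => hy.1⟩ hpmem
    calc n (Set.Ici p) ≤ n (Set.Ici (phiPlus μ n s)) :=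
          measure_mono (Ici_subset_Ici.mpr hφ)
    _ = nPhiPlus μ n s := by rw [nPhiPlus, if_pos hne]
    _ ≤ nPhiMinus μ n s + nPhiPlus μ n s := le_add_self
  have h1 : (⊤:ℝ≥0∞) = ∫⁻ _ in Set.Ioi (0:ℝ), n (Set.Ici p) := by
    rw [MeasureTheory.setLIntegral_const, Real.volume_Ioi, ENNReal.mul_top hppos.ne']
  refine top_le_iff.mp ?_
  rw [h1]
  refine MeasureTheory.lintegral_mono_ae ?_
  exact (MeasureTheory.ae_restrict_iff' measurableSet_Ioi).mpr
    (Filter.Eventually.of_forall hlow)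

lemma divergence_of_point_minus (p : ℝ) (hp0 : 0 ≤ p) (hptop : psiMinus μ n p = ⊤)
    (hppos : 0 < n (Set.Iic (-p))) :
    ∫⁻ s in Set.Ioi (0:ℝ), (nPhiMinus μ n s + nPhiPlus μ n s) = ⊤ := by
  have hlow : ∀ s : ℝ, s ∈ Set.Ioi (0:ℝ) →
      n (Set.Iic (-p)) ≤ nPhiMinus μ n s + nPhiPlus μ n s := by
    intro s _
    have hpmem : p ∈ phiMinusSet μ n s := ⟨hp0, by rw [hptop]; exact le_top⟩
    have hne : (phiMinusSet μ n s).Nonempty := ⟨p, hpmem⟩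
    have hφ : phiMinus μ n s ≤ p := csInf_le ⟨0, fun y hy => hy.1⟩ hpmem
    calc n (Set.Iic (-p)) ≤ n (Set.Iic (-(phiMinus μ n s))) :=
          measure_mono (Iic_subset_Iic.mpr (by linarith))
    _ = nPhiMinus μ n s := by rw [nPhiMinus, if_pos hne]
    _ ≤ nPhiMinus μ n s + nPhiPlus μ n s := le_add_right le_rfl
  have h1 : (⊤:ℝ≥0∞) = ∫⁻ _ in Set.Ioi (0:ℝ), n (Set.Iic (-p)) := by
    rw [MeasureTheory.setLIntegral_const, Real.volume_Ioi, ENNReal.mul_top hppos.ne']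
  refine top_le_iff.mp ?_
  rw [h1]
  refine MeasureTheory.lintegral_mono_ae ?_
  exact (MeasureTheory.ae_restrict_iff' measurableSet_Ioi).mpr
    (Filter.Eventually.of_forall hlow)

lemma easy_plus [MeasureTheory.IsProbabilityMeasure μ]
    (hpos : 0 < μ (Set.Ioi (0:ℝ)))
    (hnsupp : ∀ x ∈ measSupport μ, 0 < n (Set.Iic x) ∧ 0 < n (Set.Ici x))
    (h : ∃ y : ℝ, psiPlus μ n y = ⊤) :
    ∫⁻ s in Set.Ioi (0:ℝ), (nPhiMinus μ n s + nPhiPlus μ n s) = ⊤ := by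
  classical
  set Sb := {y : ℝ | psiPlus μ n y = ⊤} with hSb
  have hSb_ne : Sb.Nonempty := h
  have hSb_sub : Sb ⊆ Set.Ici 0 := by
    intro y hy
    by_contra hy0
    have hempty : psiPlus μ n y = 0 := by
      rw [psiPlus, Set.Icc_eq_empty (fun hle : (0:ℝ) ≤ y => hy0 hle),
        Measure.restrict_empty, MeasureTheory.lintegral_zero_measure]
    rw [hSb, Set.mem_setOf_eq, hempty] at hy
    exact ENNReal.zero_ne_top hy
  have hbdd : BddBelow Sb := ⟨0, fun y hy => hSb_sub hy⟩
  set b0 := sInf Sb with hb0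
  have hb0_nonneg : 0 ≤ b0 := le_csInf hSb_ne fun y hy => hSb_sub hy
  have hb0_up : ∀ δ : ℝ, 0 < δ → psiPlus μ n (b0 + δ) = ⊤ := by
    intro δ hδ
    obtain ⟨e, heS, he⟩ := exists_lt_of_csInf_lt hSb_ne
      (lt_add_of_pos_right b0 hδ)
    exact top_le_iff.mp (le_of_eq_of_le heS.symm (psiPlus_mono (le_of_lt he)))
  have hext : ∀ c d : ℝ, 0 ≤ c → c ≤ d → μ (Set.Ioi c) = 0 →
      psiPlus μ n d = psiPlus μ n c := by
    intro c d hc hcd htail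
    rw [psiPlus, psiPlus, ← Set.Icc_union_Ioc_eq_Icc hc hcd,
      MeasureTheory.lintegral_union measurableSet_Ioc
        (Set.disjoint_left.mpr fun x hx hx2 => absurd hx.2 (not_le.mpr hx2.1)),
      MeasureTheory.setLIntegral_measure_zero _ _
        (measure_mono_null Set.Ioc_subset_Ioi_self htail), add_zero]
  by_cases hδpos : ∃ δ : ℝ, 0 < δ ∧ 0 < n (Set.Ici (b0 + δ))
  · obtain ⟨δ, hδ, hn⟩ := hδpos
    exact divergence_of_point_plus (b0 + δ) (by linarith) (hb0_up δ hδ) hn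
  · push_neg at hδpos
    have htail : μ (Set.Ioi b0) = 0 := by
      have hsub : Set.Ioi b0 ⊆ (measSupport μ)ᶜ := by
        intro s hs hcon
        have h1 := (hnsupp s hcon).2
        have h2 := hδpos (s - b0) (by simpa using hs)
        rw [show b0 + (s - b0) = s by ring] at h2
        exact absurd h1 (not_lt.mpr h2)
      exact measure_mono_null hsub (measSupport_compl_null μ)
    have hψb0 : psiPlus μ n b0 = ⊤ := by
      rw [← hext b0 (b0 + 1) hb0_nonneg (by linarith) htail]
      exact hb0_up 1 one_pos
    by_cases hnb0 : 0 < n (Set.Ici b0)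
    · exact divergence_of_point_plus b0 hb0_nonneg hψb0 hnb0
    · exfalso
      have hb0_not : b0 ∉ measSupport μ := fun hcon =>
        absurd (hnsupp b0 hcon).2 hnb0
      simp only [measSupport, Set.mem_setOf_eq, not_forall] at hb0_not
      obtain ⟨U, hU, hbU, hμU⟩ := hb0_not
      obtain ⟨ε, hε, hball⟩ := Metric.isOpen_iff.mp hU b0 hbU
      rw [Real.ball_eq_Ioo] at hball
      have hμIoo : μ (Set.Ioo (b0-ε) (b0+ε)) = 0 :=
        measure_mono_null hball (le_zero_iff.mp (not_lt.mp hμU))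
      have htail2 : μ (Set.Ioi (b0 - ε)) = 0 := by
        have hsub3 : Set.Ioi (b0-ε) ⊆ Set.Ioo (b0-ε) (b0+ε) ∪ Set.Ioi b0 := by
          intro x hx
          rcases le_or_gt x b0 with h | h
          · exact Or.inl ⟨hx, by linarith⟩
          · exact Or.inr h
        exact measure_mono_null hsub3 (measure_union_null hμIoo htail)
      rcases le_or_gt 0 (b0 - ε) with hbe | hbe
      · have hfin2 : psiPlus μ n (b0 - ε) ≠ ⊤ := by
          intro hcon
          have : b0 ≤ b0 - ε := csInf_le hbdd hcon
          linarith
        refine hfin2 ?_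
        rw [← hext (b0 - ε) (b0 + 1) hbe (by linarith) htail2]
        exact hb0_up 1 one_pos
      · refine absurd (measure_mono_null (Set.Ioi_subset_Ioi (by linarith)) htail2) hpos.ne'

lemma easy_minus [MeasureTheory.IsProbabilityMeasure μ]
    (hneg : 0 < μ (Set.Iio (0:ℝ)))
    (hnsupp : ∀ x ∈ measSupport μ, 0 < n (Set.Iic x) ∧ 0 < n (Set.Ici x))
    (h : ∃ z : ℝ, psiMinus μ n z = ⊤) :
    ∫⁻ s in Set.Ioi (0:ℝ), (nPhiMinus μ n s + nPhiPlus μ n s) = ⊤ := by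
  classical
  set Sb := {z : ℝ | psiMinus μ n z = ⊤} with hSb
  have hSb_ne : Sb.Nonempty := h
  have hSb_sub : Sb ⊆ Set.Ici 0 := by
    intro z hz
    by_contra hz0
    have hzlt : z < 0 := not_le.mp hz0
    have hempty : psiMinus μ n z = 0 := by
      rw [psiMinus, Set.Icc_eq_empty (by intro hle; linarith : ¬ (-z ≤ (0:ℝ))),
        Measure.restrict_empty, MeasureTheory.lintegral_zero_measure]
    rw [hSb, Set.mem_setOf_eq, hempty] at hz
    exact ENNReal.zero_ne_top hz
  have hbdd : BddBelow Sb := ⟨0, fun y hy => hSb_sub hy⟩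
  set b0 := sInf Sb with hb0
  have hb0_nonneg : 0 ≤ b0 := le_csInf hSb_ne fun y hy => hSb_sub hy
  have hb0_up : ∀ δ : ℝ, 0 < δ → psiMinus μ n (b0 + δ) = ⊤ := by
    intro δ hδ
    obtain ⟨e, heS, he⟩ := exists_lt_of_csInf_lt hSb_ne (lt_add_of_pos_right b0 hδ)
    exact top_le_iff.mp (le_of_eq_of_le heS.symm (psiMinus_mono (le_of_lt he)))
  have hext : ∀ c d : ℝ, 0 ≤ c → c ≤ d → μ (Set.Iio (-c)) = 0 →
      psiMinus μ n d = psiMinus μ n c := by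
    intro c d hc hcd htail
    rw [psiMinus, psiMinus, ← Set.Ico_union_Icc_eq_Icc (by linarith : -d ≤ -c) (by linarith),
      MeasureTheory.lintegral_union measurableSet_Icc
        (Set.disjoint_left.mpr fun x hx hx2 => absurd hx2.1 (not_le.mpr hx.2)),
      MeasureTheory.setLIntegral_measure_zero _ _
        (measure_mono_null (fun x hx => hx.2) htail), zero_add]
  by_cases hδpos : ∃ δ : ℝ, 0 < δ ∧ 0 < n (Set.Iic (-(b0 + δ)))
  · obtain ⟨δ, hδ, hn⟩ := hδpos
    exact divergence_of_point_minus (b0 + δ) (by linarith) (hb0_up δ hδ) hn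
  · push_neg at hδpos
    have htail : μ (Set.Iio (-b0)) = 0 := by
      have hsub : Set.Iio (-b0) ⊆ (measSupport μ)ᶜ := by
        intro s hs hcon
        have h1 := (hnsupp s hcon).1
        have h2 := hδpos (-b0 - s) (by simp only [Set.mem_Iio] at hs; linarith)
        rw [show -(b0 + (-b0 - s)) = s by ring] at h2
        exact absurd h1 (not_lt.mpr h2)
      exact measure_mono_null hsub (measSupport_compl_null μ)
    have hψb0 : psiMinus μ n b0 = ⊤ := by
      rw [← hext b0 (b0 + 1) hb0_nonneg (by linarith) htail]
      exact hb0_up 1 one_pos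
    by_cases hnb0 : 0 < n (Set.Iic (-b0))
    · exact divergence_of_point_minus b0 hb0_nonneg hψb0 hnb0
    · exfalso
      have hb0_not : -b0 ∉ measSupport μ := fun hcon =>
        absurd (hnsupp (-b0) hcon).1 hnb0
      simp only [measSupport, Set.mem_setOf_eq, not_forall] at hb0_not
      obtain ⟨U, hU, hbU, hμU⟩ := hb0_not
      obtain ⟨ε, hε, hball⟩ := Metric.isOpen_iff.mp hU (-b0) hbU
      rw [Real.ball_eq_Ioo] at hball
      have hμIoo : μ (Set.Ioo (-b0-ε) (-b0+ε)) = 0 :=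
        measure_mono_null hball (le_zero_iff.mp (not_lt.mp hμU))
      have htail2 : μ (Set.Iio (-b0 + ε)) = 0 := by
        have hsub3 : Set.Iio (-b0+ε) ⊆ Set.Ioo (-b0-ε) (-b0+ε) ∪ Set.Iio (-b0) := by
          intro x hx
          rcases le_or_gt (-b0) x with h | h
          · exact Or.inl ⟨by simp only [Set.mem_Iio] at hx; linarith, hx⟩
          · exact Or.inr h
        exact measure_mono_null hsub3 (measure_union_null hμIoo htail)
      rcases le_or_gt 0 (b0 - ε) with hbe | hbe
      · have hfin2 : psiMinus μ n (b0 - ε) ≠ ⊤ := by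
          intro hcon
          have : b0 ≤ b0 - ε := csInf_le hbdd hcon
          linarith
        refine hfin2 ?_
        have htail3 : μ (Set.Iio (-(b0 - ε))) = 0 := by
          rw [show -(b0 - ε) = -b0 + ε by ring]; exact htail2
        rw [← hext (b0 - ε) (b0 + 1) hbe (by linarith) htail3]
        exact hb0_up 1 one_pos
      · refine absurd (measure_mono_null (Set.Iio_subset_Iio (by linarith)) htail2) hneg.ne'

end CancelEasy
section Blocks

open Set MeasureTheory Filter

variable {μ n : MeasureTheory.Measure ℝ}

/-- remaining mass at level `v` -/
noncomputable def Rre (μ n : MeasureTheory.Measure ℝ) (v : ℝ≥0∞) : ℝ :=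
  (μ (Set.Ici (sInf (DinvSet μ n v)))).toReal + (μ (Set.Iio (sSup (GinvSet μ n v)))).toReal

lemma Dmu_eq_withDensity (y : ℝ) :
    Dmu μ n y = (μ.withDensity fun s => (n (Set.Ici s))⁻¹) (Set.Icc 0 y) := by
  rw [withDensity_apply _ measurableSet_Icc]; rfl

lemma Gmu_eq_withDensity (x : ℝ) :
    Gmu μ n x = (μ.withDensity fun s => (n (Set.Iic s))⁻¹) (Set.Icc x 0) := by
  rw [withDensity_apply _ measurableSet_Icc]; rfl

lemma Dmu_zero_of_neg {y : ℝ} (hy : y < 0) : Dmu μ n y = 0 := by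
  rw [Dmu, Set.Icc_eq_empty (fun h : (0:ℝ) ≤ y => absurd h (not_le.mpr hy)),
    Measure.restrict_empty, MeasureTheory.lintegral_zero_measure]

lemma Gmu_zero_of_pos {x : ℝ} (hx : 0 < x) : Gmu μ n x = 0 := by
  rw [Gmu, Set.Icc_eq_empty (fun h : x ≤ (0:ℝ) => absurd h (not_le.mpr hx)),
    Measure.restrict_empty, MeasureTheory.lintegral_zero_measure]

lemma DinvSet_nonempty {v : ℝ≥0∞} (hv : v < ⨆ y, Dmu μ n y) : (DinvSet μ n v).Nonempty := by
  obtain ⟨y, hy⟩ := lt_iSup_iff.mp hv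
  rcases le_or_gt 0 y with h | h
  · exact ⟨y, h, hy⟩
  · rw [Dmu_zero_of_neg h] at hy
    exact absurd hy (by simp)

lemma GinvSet_nonempty {v : ℝ≥0∞} (hv : v < ⨆ x, Gmu μ n x) : (GinvSet μ n v).Nonempty := by
  obtain ⟨x, hx⟩ := lt_iSup_iff.mp hv
  rcases le_or_gt x 0 with h | h
  · exact ⟨x, h, hx⟩
  · rw [Gmu_zero_of_pos h] at hx
    exact absurd hx (by simp)

lemma Dmu_gt_of_gt {v : ℝ≥0∞} (hne : (DinvSet μ n v).Nonempty) {y : ℝ}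
    (hy : sInf (DinvSet μ n v) < y) : v < Dmu μ n y := by
  obtain ⟨e, heS, he⟩ := exists_lt_of_csInf_lt hne hy
  exact lt_of_lt_of_le heS.2 (Dmu_mono (le_of_lt he))

lemma Gmu_gt_of_lt {v : ℝ≥0∞} (hne : (GinvSet μ n v).Nonempty) {x : ℝ}
    (hx : x < sSup (GinvSet μ n v)) : v < Gmu μ n x := by
  obtain ⟨e, heS, he⟩ := exists_lt_of_lt_csSup hne hx
  exact lt_of_lt_of_le heS.2 (Gmu_anti (le_of_lt he))

lemma prob_split [MeasureTheory.IsProbabilityMeasure μ] (t : ℝ) :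
    (μ (Set.Iio t)).toReal + (μ (Set.Ici t)).toReal = 1 := by
  have h := measure_add_measure_compl (μ := μ) (s := Set.Iio t) measurableSet_Iio
  rw [compl_Iio, measure_univ] at h
  have h2 := congrArg ENNReal.toReal h
  rwa [ENNReal.toReal_add (measure_ne_top μ _) (measure_ne_top μ _), ENNReal.toReal_one] at h2

lemma exists_tail_small_right [MeasureTheory.IsProbabilityMeasure μ] {ε : ℝ} (hε : 0 < ε) :
    ∃ T : ℝ, 0 < T ∧ (μ (Set.Ici T)).toReal ≤ ε := by
  have hinter : ⋂ m : ℕ, Set.Ici ((m:ℝ)+1) = ∅ := by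
    ext x
    simp only [mem_iInter, mem_Ici, mem_empty_iff_false, iff_false, not_forall, not_le]
    obtain ⟨m, hm⟩ := exists_nat_gt x
    exact ⟨m, by linarith⟩
  have hanti : Antitone fun m : ℕ => Set.Ici ((m:ℝ)+1) := by
    intro a b hab
    exact Ici_subset_Ici.mpr (by exact_mod_cast add_le_add_left (Nat.cast_le.mpr hab) 1)
  have htend := tendsto_measure_iInter_atTop (μ := μ)
    (fun m => measurableSet_Ici.nullMeasurableSet) hanti ⟨0, measure_ne_top μ _⟩
  rw [hinter, measure_empty] at htend
  have hev := htend.eventually_lt_const (show (0:ℝ≥0∞) < ENNReal.ofReal ε from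
    ENNReal.ofReal_pos.mpr hε)
  obtain ⟨m, hm⟩ := hev.exists
  exact ⟨(m:ℝ)+1, by positivity,
    ENNReal.toReal_le_of_le_ofReal (le_of_lt hε) (le_of_lt hm)⟩

lemma exists_tail_small_left [MeasureTheory.IsProbabilityMeasure μ] {ε : ℝ} (hε : 0 < ε) :
    ∃ T : ℝ, 0 < T ∧ (μ (Set.Iio (-T))).toReal ≤ ε := by
  have hinter : ⋂ m : ℕ, Set.Iio (-(m:ℝ)-1) = ∅ := by
    ext x
    simp only [mem_iInter, mem_Iio, mem_empty_iff_false, iff_false, not_forall, not_lt]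
    obtain ⟨m, hm⟩ := exists_nat_gt (-x)
    exact ⟨m, by linarith⟩
  have hanti : Antitone fun m : ℕ => Set.Iio (-(m:ℝ)-1) := by
    intro a b hab
    refine Iio_subset_Iio ?_
    have : (a:ℝ) ≤ (b:ℝ) := Nat.cast_le.mpr hab
    linarith
  have htend := tendsto_measure_iInter_atTop (μ := μ)
    (fun m => measurableSet_Iio.nullMeasurableSet) hanti ⟨0, measure_ne_top μ _⟩
  rw [hinter, measure_empty] at htend
  have hev := htend.eventually_lt_const (show (0:ℝ≥0∞) < ENNReal.ofReal ε from
    ENNReal.ofReal_pos.mpr hε)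
  obtain ⟨m, hm⟩ := hev.exists
  refine ⟨(m:ℝ)+1, by positivity, ?_⟩
  have heq : -((m:ℝ)+1) = -(m:ℝ)-1 := by ring
  rw [heq]
  exact ENNReal.toReal_le_of_le_ofReal (le_of_lt hε) (le_of_lt hm)

lemma Rre_pos [MeasureTheory.IsProbabilityMeasure μ]
    (hpos : 0 < μ (Set.Ioi (0:ℝ))) {v : ℝ≥0∞} (hv : v < ⨆ y, Dmu μ n y) :
    0 < Rre μ n v := by
  have hne : (DinvSet μ n v).Nonempty := DinvSet_nonempty hv
  set y0 := sInf (DinvSet μ n v) with hy0def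
  have hy0 : 0 ≤ y0 := le_csInf hne fun y hy => hy.1
  have hμne : μ (Set.Ici y0) ≠ 0 := by
    intro hμ0
    rcases eq_or_lt_of_le hy0 with heq | hlt
    · refine hpos.ne' (measure_mono_null ?_ hμ0)
      rw [← heq]
      exact Set.Ioi_subset_Ici_self
    · have hall : ∀ y : ℝ, Dmu μ n y ≤ v := by
        intro y
        rcases lt_or_ge y y0 with hy | hy
        · rcases le_or_gt 0 y with h0y | h0y
          · by_contra hcon
            have hmem : y ∈ DinvSet μ n v := ⟨h0y, not_le.mp hcon⟩
            exact absurd (csInf_le ⟨0, fun z hz => hz.1⟩ hmem) (not_le.mpr hy)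
          · rw [Dmu_zero_of_neg h0y]; exact zero_le
        · set ν := μ.withDensity fun s => (n (Set.Ici s))⁻¹ with hν
          have hsplit : Set.Icc (0:ℝ) y ⊆ Set.Ico 0 y0 ∪ Set.Ici y0 := by
            intro t ht
            rcases lt_or_ge t y0 with h | h
            · exact Or.inl ⟨ht.1, h⟩
            · exact Or.inr h
          have hnull : ν (Set.Ici y0) = 0 := (withDensity_absolutelyContinuous μ _) hμ0
          have hIco : ν (Set.Ico 0 y0) ≤ v := by
            have hunion : Set.Ico (0:ℝ) y0 = ⋃ m : ℕ, Set.Icc (0:ℝ) (y0 - y0/(m+1)) := by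
              ext t
              simp only [mem_Ico, mem_iUnion, mem_Icc]
              constructor
              · rintro ⟨ht0, hty⟩
                obtain ⟨m, hm⟩ := exists_nat_one_div_lt
                  (show 0 < (y0 - t)/y0 from div_pos (by linarith) hlt)
                have hm1 : (0:ℝ) < (m:ℝ)+1 := by positivity
                rw [div_lt_div_iff₀ hm1 hlt] at hm
                refine ⟨m, ht0, ?_⟩
                have h4 : y0 / ((m:ℝ)+1) ≤ y0 - t := by
                  rw [div_le_iff₀ hm1]; linarith
                linarith
              · rintro ⟨m, ht0, hty⟩
                have hpos2 : 0 < y0/((m:ℝ)+1) := by positivity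
                exact ⟨ht0, by linarith⟩
            rw [hunion]
            have hmono : Monotone fun m : ℕ => Set.Icc (0:ℝ) (y0 - y0/(m+1)) := by
              intro i j hij
              apply Icc_subset_Icc le_rfl
              have h1 : (i:ℝ)+1 ≤ (j:ℝ)+1 := by exact_mod_cast Nat.succ_le_succ hij
              have h2 : y0/((j:ℝ)+1) ≤ y0/((i:ℝ)+1) :=
                div_le_div_of_nonneg_left (le_of_lt hlt) (by positivity) h1
              linarith
            rw [Directed.measure_iUnion hmono.directed_le]
            refine iSup_le fun m => ?_
            have hDm : Dmu μ n (y0 - y0/(m+1)) ≤ v := by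
              rcases le_or_gt 0 (y0 - y0/(m+1)) with h0 | h0
              · by_contra hcon
                have hmem : (y0 - y0/((m:ℝ)+1)) ∈ DinvSet μ n v := ⟨h0, not_le.mp hcon⟩
                have h3 := csInf_le ⟨0, fun z hz => hz.1⟩ hmem
                have hpos2 : 0 < y0/((m:ℝ)+1) := by positivity
                rw [← hy0def] at h3
                linarith
              · rw [Dmu_zero_of_neg h0]; exact zero_le
            calc ν (Set.Icc 0 (y0 - y0/(m+1))) = Dmu μ n (y0 - y0/(m+1)) :=
                  (Dmu_eq_withDensity _).symm
            _ ≤ v := hDm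
          calc Dmu μ n y = ν (Set.Icc 0 y) := Dmu_eq_withDensity y
          _ ≤ ν (Set.Ico 0 y0 ∪ Set.Ici y0) := measure_mono hsplit
          _ ≤ ν (Set.Ico 0 y0) + ν (Set.Ici y0) := measure_union_le _ _
          _ = ν (Set.Ico 0 y0) := by rw [hnull, add_zero]
          _ ≤ v := hIco
      exact absurd (iSup_le hall) (not_le.mpr hv)
  exact add_pos_of_pos_of_nonneg
    (ENNReal.toReal_pos hμne (measure_ne_top μ _)) ENNReal.toReal_nonneg

end Blocks
section Blocks2

open Set MeasureTheory Filter

variable {μ n : MeasureTheory.Measure ℝ}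

lemma claimY [MeasureTheory.IsProbabilityMeasure μ] [MeasureTheory.NullSingletonClass μ]
    (hpos : 0 < μ (Set.Ioi (0:ℝ)))
    (hnfin : ∀ s : ℝ, 0 < s → n (Set.Ici s) < ⊤ ∧ n (Set.Iic (-s)) < ⊤)
    (hfinD : ∀ y : ℝ, Dmu μ n y ≠ ⊤) {ε : ℝ} (hε : 0 < ε) :
    ∃ w, w < (⨆ y, Dmu μ n y) ∧ (μ (Set.Ici (sInf (DinvSet μ n w)))).toReal ≤ ε := by
  set V := ⨆ y, Dmu μ n y with hV
  by_cases hall : ∀ T : ℝ, 0 < T → Dmu μ n T < V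
  · obtain ⟨T, hT, hTε⟩ := exists_tail_small_right (μ := μ) hε
    refine ⟨Dmu μ n T, hall T hT, ?_⟩
    have hgeq : T ≤ sInf (DinvSet μ n (Dmu μ n T)) := by
      refine le_csInf (DinvSet_nonempty (hall T hT)) fun e he => ?_
      by_contra hcon
      exact absurd he.2 (not_lt.mpr (Dmu_mono (le_of_lt (not_le.mp hcon))))
    exact le_trans (ENNReal.toReal_mono (measure_ne_top μ _)
      (measure_mono (Ici_subset_Ici.mpr hgeq))) hTε
  · push_neg at hall
    obtain ⟨T, hT, hVT⟩ := hall
    have hVeq : Dmu μ n T = V := le_antisymm (le_iSup (fun y => Dmu μ n y) T) hVT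
    have hVfin : V ≠ ⊤ := hVeq ▸ hfinD T
    set A := {t : ℝ | 0 ≤ t ∧ Dmu μ n t = V} with hA
    have hAne : A.Nonempty := ⟨T, le_of_lt hT, hVeq⟩
    have hAbdd : BddBelow A := ⟨0, fun t ht => ht.1⟩
    set T0 := sInf A with hT0def
    have hT0nonneg : 0 ≤ T0 := le_csInf hAne fun t ht => ht.1
    have hIoiA : ∀ T' ∈ A, μ (Set.Ioi T') = 0 := by
      intro T' hT'
      have hnu : ∀ M : ℕ, μ (Set.Ioc T' (T' + (M:ℝ) + 1)) = 0 := by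
        intro M
        set ν := μ.withDensity fun s => (n (Set.Ici s))⁻¹ with hν
        have hle : T' ≤ T' + (M:ℝ) + 1 := by
          have : (0:ℝ) ≤ (M:ℝ) := Nat.cast_nonneg M
          linarith
        have h2 : Set.Icc (0:ℝ) (T' + M + 1) = Set.Icc 0 T' ∪ Set.Ioc T' (T' + M + 1) :=
          (Set.Icc_union_Ioc_eq_Icc hT'.1 hle).symm
        have hdisj : Disjoint (Set.Icc (0:ℝ) T') (Set.Ioc T' (T' + (M:ℝ) + 1)) :=
          Set.disjoint_left.mpr fun x hx hx2 => absurd hx.2 (not_le.mpr hx2.1)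
        have h4 : Dmu μ n (T' + M + 1) = Dmu μ n T' + ν (Set.Ioc T' (T'+M+1)) := by
          rw [Dmu_eq_withDensity, h2, measure_union hdisj measurableSet_Ioc,
            ← Dmu_eq_withDensity]
        have h5 : Dmu μ n (T' + (M:ℝ) + 1) = V :=
          le_antisymm (le_iSup (fun y => Dmu μ n y) _)
            (le_of_eq_of_le hT'.2.symm (Dmu_mono hle))
        rw [h5, ← hT'.2] at h4
        have h6 : ν (Set.Ioc T' (T' + (M:ℝ) + 1)) = 0 := by
          have h7 := (ENNReal.add_sub_cancel_left (a := Dmu μ n T')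
            (b := ν (Set.Ioc T' (T' + (M:ℝ) + 1))) (hfinD T')).symm
          rw [← h4, tsub_self] at h7
          exact h7
        refine null_of_setLIntegral_zero (f := fun s => (n (Set.Ici s))⁻¹)
          ((meas_nIci n).inv) measurableSet_Ioc ?_ ?_
        · intro s hs
          have hs0 : 0 < s := lt_of_le_of_lt hT'.1 hs.1
          simp only [ne_eq, ENNReal.inv_eq_zero]
          exact (hnfin s hs0).1.ne
        · rw [← withDensity_apply _ measurableSet_Ioc]
          exact h6
      have hsub : Set.Ioi T' ⊆ ⋃ M : ℕ, Set.Ioc T' (T' + (M:ℝ) + 1) := by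
        intro x hx
        obtain ⟨M, hM⟩ := exists_nat_ge (x - T')
        exact mem_iUnion.mpr ⟨M, hx, by linarith⟩
      exact measure_mono_null hsub (measure_iUnion_null hnu)
    have hT0null : μ (Set.Ioi T0) = 0 := by
      have hTm : ∀ m : ℕ, ∃ T', T' ∈ A ∧ T' < T0 + 1/(m+1) := fun m =>
        exists_lt_of_csInf_lt hAne (lt_add_of_pos_right _ (by positivity))
      choose Tm hTmA hTmlt using hTm
      have hsub : Set.Ioi T0 ⊆ ⋃ m : ℕ, Set.Ioi (Tm m) := by
        intro x hx
        obtain ⟨m, hm⟩ := exists_nat_one_div_lt (show (0:ℝ) < x - T0 from sub_pos.mpr hx)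
        have := hTmlt m
        exact mem_iUnion.mpr ⟨m, by simp only [mem_Ioi]; linarith⟩
      exact measure_mono_null hsub (measure_iUnion_null fun m => hIoiA _ (hTmA m))
    have hT0pos : 0 < T0 := by
      rcases lt_or_eq_of_le hT0nonneg with h | h
      · exact h
      · exact absurd (by rw [h]; exact hT0null) hpos.ne'
    have hIciT0 : μ (Set.Ici T0) = 0 := by
      have hd : Set.Ici T0 = {T0} ∪ Set.Ioi T0 := by
        ext x
        simp only [mem_Ici, mem_union, mem_singleton_iff, mem_Ioi]
        constructor
        · intro h
          rcases eq_or_lt_of_le h with h2 | h2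
          · exact Or.inl h2.symm
          · exact Or.inr h2
        · rintro (h | h)
          · exact le_of_eq h.symm
          · exact le_of_lt h
      rw [hd]
      exact measure_union_null (measure_singleton T0) hT0null
    have hclose : ∃ T' : ℝ, 0 ≤ T' ∧ T' < T0 ∧ (μ (Set.Ici T')).toReal ≤ ε := by
      have hinter : ⋂ m : ℕ, Set.Ici (T0 - T0/(m+1)) = Set.Ici T0 := by
        ext x
        simp only [mem_iInter, mem_Ici]
        constructor
        · intro h
          by_contra hcon
          push_neg at hcon
          obtain ⟨m, hm⟩ := exists_nat_one_div_lt
            (show 0 < (T0 - x)/T0 from div_pos (by linarith) hT0pos)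
          have hm1 : (0:ℝ) < (m:ℝ)+1 := by positivity
          rw [div_lt_div_iff₀ hm1 hT0pos] at hm
          have h4 : T0 / ((m:ℝ)+1) < T0 - x := by
            rw [div_lt_iff₀ hm1]; linarith
          have := h m
          linarith
        · intro h m
          have hpos2 : 0 < T0/((m:ℝ)+1) := by positivity
          linarith
      have hanti : Antitone fun m : ℕ => Set.Ici (T0 - T0/(m+1)) := by
        intro i j hij
        apply Ici_subset_Ici.mpr
        have h1 : (i:ℝ)+1 ≤ (j:ℝ)+1 := by exact_mod_cast Nat.succ_le_succ hij
        have h2 : T0/((j:ℝ)+1) ≤ T0/((i:ℝ)+1) :=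
          div_le_div_of_nonneg_left (le_of_lt hT0pos) (by positivity) h1
        linarith
      have htend := tendsto_measure_iInter_atTop (μ := μ)
        (fun m => measurableSet_Ici.nullMeasurableSet) hanti ⟨0, measure_ne_top μ _⟩
      rw [hinter, hIciT0] at htend
      have hev := htend.eventually_lt_const (show (0:ℝ≥0∞) < ENNReal.ofReal ε from
        ENNReal.ofReal_pos.mpr hε)
      obtain ⟨m, hm⟩ := hev.exists
      have hT0m : 0 < T0/((m:ℝ)+1) := by positivity
      have hT0m2 : T0/((m:ℝ)+1) ≤ T0 := div_le_self (le_of_lt hT0pos) (by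
        have : (0:ℝ) ≤ (m:ℝ) := Nat.cast_nonneg m
        linarith)
      exact ⟨T0 - T0/((m:ℝ)+1), by linarith, by linarith,
        ENNReal.toReal_le_of_le_ofReal (le_of_lt hε) (le_of_lt hm)⟩
    obtain ⟨T', hT'0, hT'lt, hT'ε⟩ := hclose
    have hwV : Dmu μ n T' < V := by
      rcases lt_or_eq_of_le (le_iSup (fun y => Dmu μ n y) T' : Dmu μ n T' ≤ V) with h | h
      · exact h
      · exact absurd (csInf_le hAbdd ⟨hT'0, h⟩) (not_le.mpr hT'lt)
    refine ⟨Dmu μ n T', hwV, ?_⟩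
    have hgeq : T' ≤ sInf (DinvSet μ n (Dmu μ n T')) := by
      refine le_csInf (DinvSet_nonempty hwV) fun e he => ?_
      by_contra hcon
      exact absurd he.2 (not_lt.mpr (Dmu_mono (le_of_lt (not_le.mp hcon))))
    exact le_trans (ENNReal.toReal_mono (measure_ne_top μ _)
      (measure_mono (Ici_subset_Ici.mpr hgeq))) hT'ε

end Blocks2
section Blocks3

open Set MeasureTheory Filter

variable {μ n : MeasureTheory.Measure ℝ}

lemma claimX [MeasureTheory.IsProbabilityMeasure μ] [MeasureTheory.NullSingletonClass μ]
    (hneg : 0 < μ (Set.Iio (0:ℝ)))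
    (hnfin : ∀ s : ℝ, 0 < s → n (Set.Ici s) < ⊤ ∧ n (Set.Iic (-s)) < ⊤)
    (hfinG : ∀ x : ℝ, Gmu μ n x ≠ ⊤) {ε : ℝ} (hε : 0 < ε) :
    ∃ w, w < (⨆ x, Gmu μ n x) ∧ (μ (Set.Iio (sSup (GinvSet μ n w)))).toReal ≤ ε := by
  set V := ⨆ x, Gmu μ n x with hV
  by_cases hall : ∀ T : ℝ, 0 < T → Gmu μ n (-T) < V
  · obtain ⟨T, hT, hTε⟩ := exists_tail_small_left (μ := μ) hε
    refine ⟨Gmu μ n (-T), hall T hT, ?_⟩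
    have hleq : sSup (GinvSet μ n (Gmu μ n (-T))) ≤ -T := by
      refine csSup_le (GinvSet_nonempty (hall T hT)) fun e he => ?_
      by_contra hcon
      exact absurd he.2 (not_lt.mpr (Gmu_anti (le_of_lt (not_le.mp hcon))))
    exact le_trans (ENNReal.toReal_mono (measure_ne_top μ _)
      (measure_mono (Iio_subset_Iio hleq))) hTε
  · push_neg at hall
    obtain ⟨T, hT, hVT⟩ := hall
    have hVeq : Gmu μ n (-T) = V := le_antisymm (le_iSup (fun x => Gmu μ n x) (-T)) hVT
    have hVfin : V ≠ ⊤ := hVeq ▸ hfinG (-T)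
    set A := {t : ℝ | 0 ≤ t ∧ Gmu μ n (-t) = V} with hA
    have hAne : A.Nonempty := ⟨T, le_of_lt hT, hVeq⟩
    have hAbdd : BddBelow A := ⟨0, fun t ht => ht.1⟩
    set T0 := sInf A with hT0def
    have hT0nonneg : 0 ≤ T0 := le_csInf hAne fun t ht => ht.1
    have hIioA : ∀ T' ∈ A, μ (Set.Iio (-T')) = 0 := by
      intro T' hT'
      have hnu : ∀ M : ℕ, μ (Set.Ico (-T' - (M:ℝ) - 1) (-T')) = 0 := by
        intro M
        set ν := μ.withDensity fun s => (n (Set.Iic s))⁻¹ with hν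
        have hM0 : (0:ℝ) ≤ (M:ℝ) := Nat.cast_nonneg M
        have hle : -T' - (M:ℝ) - 1 ≤ -T' := by linarith
        have hle2 : -T' ≤ (0:ℝ) := by linarith [hT'.1]
        have h2 : Set.Icc (-T' - (M:ℝ) - 1) (0:ℝ)
            = Set.Ico (-T' - (M:ℝ) - 1) (-T') ∪ Set.Icc (-T') 0 :=
          (Set.Ico_union_Icc_eq_Icc hle hle2).symm
        have hdisj : Disjoint (Set.Ico (-T' - (M:ℝ) - 1) (-T')) (Set.Icc (-T') (0:ℝ)) :=
          Set.disjoint_left.mpr fun x hx hx2 => absurd hx2.1 (not_le.mpr hx.2)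
        have h4 : Gmu μ n (-T' - (M:ℝ) - 1)
            = ν (Set.Ico (-T' - (M:ℝ) - 1) (-T')) + Gmu μ n (-T') := by
          rw [Gmu_eq_withDensity, h2, measure_union hdisj measurableSet_Icc,
            ← Gmu_eq_withDensity]
        have h5 : Gmu μ n (-T' - (M:ℝ) - 1) = V :=
          le_antisymm (le_iSup (fun x => Gmu μ n x) _)
            (le_of_eq_of_le hT'.2.symm (Gmu_anti hle))
        rw [h5, hT'.2] at h4
        have h6 : ν (Set.Ico (-T' - (M:ℝ) - 1) (-T')) = 0 := by
          have h7 := (ENNReal.add_sub_cancel_right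
            (a := ν (Set.Ico (-T' - (M:ℝ) - 1) (-T'))) (b := V) hVfin).symm
          rw [← h4, tsub_self] at h7
          exact h7
        refine null_of_setLIntegral_zero (f := fun s => (n (Set.Iic s))⁻¹)
          ((meas_nIic n).inv) measurableSet_Ico ?_ ?_
        · intro s hs
          have hs0 : s < 0 := lt_of_lt_of_le hs.2 hle2
          simp only [ne_eq, ENNReal.inv_eq_zero]
          have h8 := (hnfin (-s) (by linarith)).2
          rw [neg_neg] at h8
          exact h8.ne
        · rw [← withDensity_apply _ measurableSet_Ico]
          exact h6
      have hsub : Set.Iio (-T') ⊆ ⋃ M : ℕ, Set.Ico (-T' - (M:ℝ) - 1) (-T') := by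
        intro x hx
        obtain ⟨M, hM⟩ := exists_nat_ge (-x - T' - 1)
        exact mem_iUnion.mpr ⟨M, by simp only [mem_Ico]; constructor <;> [linarith; exact hx]⟩
      exact measure_mono_null hsub (measure_iUnion_null hnu)
    have hT0null : μ (Set.Iio (-T0)) = 0 := by
      have hTm : ∀ m : ℕ, ∃ T', T' ∈ A ∧ T' < T0 + 1/(m+1) := fun m =>
        exists_lt_of_csInf_lt hAne (lt_add_of_pos_right _ (by positivity))
      choose Tm hTmA hTmlt using hTm
      have hsub : Set.Iio (-T0) ⊆ ⋃ m : ℕ, Set.Iio (-(Tm m)) := by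
        intro x hx
        simp only [mem_Iio] at hx
        obtain ⟨m, hm⟩ := exists_nat_one_div_lt (show (0:ℝ) < -x - T0 by linarith)
        have := hTmlt m
        exact mem_iUnion.mpr ⟨m, by simp only [mem_Iio]; linarith⟩
      exact measure_mono_null hsub (measure_iUnion_null fun m => hIioA _ (hTmA m))
    have hT0pos : 0 < T0 := by
      rcases lt_or_eq_of_le hT0nonneg with h | h
      · exact h
      · refine absurd ?_ hneg.ne'
        have h2 : -T0 = (0:ℝ) := by rw [← h]; ring
        rw [h2] at hT0null
        exact hT0null
    have hIicT0 : μ (Set.Iic (-T0)) = 0 := by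
      have hd : Set.Iic (-T0) = Set.Iio (-T0) ∪ {-T0} := by
        ext x
        simp only [mem_Iic, mem_union, mem_singleton_iff, mem_Iio]
        constructor
        · intro h
          rcases lt_or_eq_of_le h with h2 | h2
          · exact Or.inl h2
          · exact Or.inr h2
        · rintro (h | h)
          · exact le_of_lt h
          · exact le_of_eq h
      rw [hd]
      exact measure_union_null hT0null (measure_singleton (-T0))
    have hclose : ∃ T' : ℝ, 0 ≤ T' ∧ T' < T0 ∧ (μ (Set.Iio (-T'))).toReal ≤ ε := by
      have hinter : ⋂ m : ℕ, Set.Iio (-(T0 - T0/(m+1))) = Set.Iic (-T0) := by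
        ext x
        simp only [mem_iInter, mem_Iio, mem_Iic]
        constructor
        · intro h
          by_contra hcon
          push_neg at hcon
          obtain ⟨m, hm⟩ := exists_nat_one_div_lt
            (show 0 < (x + T0)/T0 from div_pos (by linarith) hT0pos)
          have hm1 : (0:ℝ) < (m:ℝ)+1 := by positivity
          rw [div_lt_div_iff₀ hm1 hT0pos] at hm
          have h4 : T0 / ((m:ℝ)+1) < x + T0 := by
            rw [div_lt_iff₀ hm1]; linarith
          have := h m
          linarith
        · intro h m
          have hpos2 : 0 < T0/((m:ℝ)+1) := by positivity
          linarith
      have hanti : Antitone fun m : ℕ => Set.Iio (-(T0 - T0/(m+1))) := by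
        intro i j hij
        refine Iio_subset_Iio ?_
        have h1 : (i:ℝ)+1 ≤ (j:ℝ)+1 := by exact_mod_cast Nat.succ_le_succ hij
        have h2 : T0/((j:ℝ)+1) ≤ T0/((i:ℝ)+1) :=
          div_le_div_of_nonneg_left (le_of_lt hT0pos) (by positivity) h1
        linarith
      have htend := tendsto_measure_iInter_atTop (μ := μ)
        (fun m => measurableSet_Iio.nullMeasurableSet) hanti ⟨0, measure_ne_top μ _⟩
      rw [hinter, hIicT0] at htend
      have hev := htend.eventually_lt_const (show (0:ℝ≥0∞) < ENNReal.ofReal ε from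
        ENNReal.ofReal_pos.mpr hε)
      obtain ⟨m, hm⟩ := hev.exists
      have hT0m : 0 < T0/((m:ℝ)+1) := by positivity
      have hT0m2 : T0/((m:ℝ)+1) ≤ T0 := div_le_self (le_of_lt hT0pos) (by
        have : (0:ℝ) ≤ (m:ℝ) := Nat.cast_nonneg m
        linarith)
      exact ⟨T0 - T0/((m:ℝ)+1), by linarith, by linarith,
        ENNReal.toReal_le_of_le_ofReal (le_of_lt hε) (le_of_lt hm)⟩
    obtain ⟨T', hT'0, hT'lt, hT'ε⟩ := hclose
    have hwV : Gmu μ n (-T') < V := by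
      rcases lt_or_eq_of_le (le_iSup (fun x => Gmu μ n x) (-T') : Gmu μ n (-T') ≤ V) with h | h
      · exact h
      · exact absurd (csInf_le hAbdd ⟨hT'0, h⟩) (not_le.mpr hT'lt)
    refine ⟨Gmu μ n (-T'), hwV, ?_⟩
    have hleq : sSup (GinvSet μ n (Gmu μ n (-T'))) ≤ -T' := by
      refine csSup_le (GinvSet_nonempty hwV) fun e he => ?_
      by_contra hcon
      exact absurd he.2 (not_lt.mpr (Gmu_anti (le_of_lt (not_le.mp hcon))))
    exact le_trans (ENNReal.toReal_mono (measure_ne_top μ _)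
      (measure_mono (Iio_subset_Iio hleq))) hT'ε

end Blocks3
section Blocks4

open Set MeasureTheory Filter

variable {μ n : MeasureTheory.Measure ℝ}

lemma compY_anti [MeasureTheory.IsProbabilityMeasure μ] {w v' : ℝ≥0∞}
    (hv' : v' < ⨆ y, Dmu μ n y) (hw : w ≤ v') :
    (μ (Set.Ici (sInf (DinvSet μ n v')))).toReal
      ≤ (μ (Set.Ici (sInf (DinvSet μ n w)))).toReal := by
  have hsub : DinvSet μ n v' ⊆ DinvSet μ n w := fun y hy => ⟨hy.1, lt_of_le_of_lt hw hy.2⟩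
  have h2 := csInf_le_csInf (⟨0, fun z hz => hz.1⟩ : BddBelow (DinvSet μ n w))
    (DinvSet_nonempty hv') hsub
  exact ENNReal.toReal_mono (measure_ne_top μ _) (measure_mono (Ici_subset_Ici.mpr h2))

lemma compX_anti [MeasureTheory.IsProbabilityMeasure μ] {w v' : ℝ≥0∞}
    (hv' : v' < ⨆ x, Gmu μ n x) (hw : w ≤ v') :
    (μ (Set.Iio (sSup (GinvSet μ n v')))).toReal
      ≤ (μ (Set.Iio (sSup (GinvSet μ n w)))).toReal := by
  have hsub : GinvSet μ n v' ⊆ GinvSet μ n w := fun x hx => ⟨hx.1, lt_of_le_of_lt hw hx.2⟩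
  have h2 := csSup_le_csSup (⟨0, fun z hz => hz.1⟩ : BddAbove (GinvSet μ n w))
    (GinvSet_nonempty hv') hsub
  exact ENNReal.toReal_mono (measure_ne_top μ _) (measure_mono (Iio_subset_Iio h2))

lemma step_exists [MeasureTheory.IsProbabilityMeasure μ] [MeasureTheory.NullSingletonClass μ]
    (hneg : 0 < μ (Set.Iio (0:ℝ))) (hpos : 0 < μ (Set.Ioi (0:ℝ)))
    (hnfin : ∀ s : ℝ, 0 < s → n (Set.Ici s) < ⊤ ∧ n (Set.Iic (-s)) < ⊤)
    (hfinD : ∀ y : ℝ, Dmu μ n y ≠ ⊤) (hfinG : ∀ x : ℝ, Gmu μ n x ≠ ⊤)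
    (hcompat : (⨆ y : ℝ, Dmu μ n y) = ⨆ x : ℝ, Gmu μ n x)
    {v : ℝ≥0∞} (hv : v < ⨆ y, Dmu μ n y) :
    ∃ v', (v < v' ∧ v' < ⨆ y, Dmu μ n y) ∧ Rre μ n v' ≤ Rre μ n v / 2 := by
  have hR := Rre_pos hpos hv
  have hε : 0 < Rre μ n v / 4 := by linarith
  obtain ⟨w1, hw1V, hw1⟩ := claimY (n := n) hpos hnfin hfinD hε
  obtain ⟨w2, hw2V, hw2⟩ := claimX (n := n) hneg hnfin hfinG hε
  rw [← hcompat] at hw2V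
  have hmax : max v (max w1 w2) < ⨆ y, Dmu μ n y := by
    simp only [max_lt_iff]
    exact ⟨hv, hw1V, hw2V⟩
  obtain ⟨v', hv'1, hv'2⟩ := exists_between hmax
  have hvv' : v < v' := lt_of_le_of_lt (le_max_left _ _) hv'1
  have hw1v' : w1 ≤ v' :=
    le_of_lt (lt_of_le_of_lt (le_trans (le_max_left w1 w2) (le_max_right v _)) hv'1)
  have hw2v' : w2 ≤ v' :=
    le_of_lt (lt_of_le_of_lt (le_trans (le_max_right w1 w2) (le_max_right v _)) hv'1)
  refine ⟨v', ⟨hvv', hv'2⟩, ?_⟩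
  have h1 : (μ (Set.Ici (sInf (DinvSet μ n v')))).toReal ≤ Rre μ n v / 4 :=
    le_trans (compY_anti hv'2 hw1v') hw1
  have hv'2G : v' < ⨆ x, Gmu μ n x := by rw [← hcompat]; exact hv'2
  have h2 : (μ (Set.Iio (sSup (GinvSet μ n v')))).toReal ≤ Rre μ n v / 4 :=
    le_trans (compX_anti hv'2G hw2v') hw2
  have h3 : Rre μ n v' = (μ (Set.Ici (sInf (DinvSet μ n v')))).toReal
      + (μ (Set.Iio (sSup (GinvSet μ n v')))).toReal := rfl
  rw [h3]
  linarith

end Blocks4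
section BlocksMain

open Set MeasureTheory Filter

variable {μ n : MeasureTheory.Measure ℝ}

lemma blocks_diverge [MeasureTheory.IsProbabilityMeasure μ] [MeasureTheory.NullSingletonClass μ]
    (hneg : 0 < μ (Set.Iio (0:ℝ))) (hpos : 0 < μ (Set.Ioi (0:ℝ)))
    (hnfin : ∀ s : ℝ, 0 < s → n (Set.Ici s) < ⊤ ∧ n (Set.Iic (-s)) < ⊤)
    (hfinD : ∀ y : ℝ, Dmu μ n y ≠ ⊤) (hfinG : ∀ x : ℝ, Gmu μ n x ≠ ⊤)
    (hcompat : (⨆ y : ℝ, Dmu μ n y) = ⨆ x : ℝ, Gmu μ n x) :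
    (∫⁻ y in Set.Ioi 0,
        (ENNReal.ofReal (1 + (μ (Set.Ici y)).toReal - mubarGinv μ n (Dmu μ n y)))⁻¹ ∂μ)
      + (∫⁻ x in Set.Iio 0,
        (ENNReal.ofReal (1 + mubarDinv μ n (Gmu μ n x) - (μ (Set.Ici x)).toReal))⁻¹ ∂μ)
      = ⊤ := by
  classical
  set Kp := ∫⁻ y in Set.Ioi 0,
      (ENNReal.ofReal (1 + (μ (Set.Ici y)).toReal - mubarGinv μ n (Dmu μ n y)))⁻¹ ∂μ with hKp
  set Km := ∫⁻ x in Set.Iio 0,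
      (ENNReal.ofReal (1 + mubarDinv μ n (Gmu μ n x) - (μ (Set.Ici x)).toReal))⁻¹ ∂μ with hKm
  set V := ⨆ y : ℝ, Dmu μ n y with hVdef
  -- V is positive
  have hVG : 0 < ⨆ x : ℝ, Gmu μ n x := by
    have hm : ∃ m : ℕ, 0 < μ (Set.Ico (-(m:ℝ)-1) 0) := by
      by_contra hcon
      push_neg at hcon
      have hnull : μ (Set.Iio 0) = 0 := by
        have hsub : Set.Iio (0:ℝ) ⊆ ⋃ m : ℕ, Set.Ico (-(m:ℝ)-1) 0 := by
          intro x hx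
          obtain ⟨m, hm2⟩ := exists_nat_ge (-x)
          exact mem_iUnion.mpr ⟨m, by constructor <;> [linarith; exact hx]⟩
        exact measure_mono_null hsub
          (measure_iUnion_null fun m => le_zero_iff.mp (hcon m))
      exact hneg.ne' hnull
    obtain ⟨m, hm⟩ := hm
    refine lt_of_lt_of_le ?_ (le_iSup (fun x => Gmu μ n x) (-(m:ℝ)-1))
    rw [Gmu]
    refine lt_of_lt_of_le ?_ (MeasureTheory.lintegral_mono_set Set.Ico_subset_Icc_self)
    rw [MeasureTheory.lintegral_pos_iff_support (show Measurable fun s : ℝ => (n (Set.Iic s))⁻¹ from (meas_nIic n).inv)]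
    have hsub : Set.Ico (-(m:ℝ)-1) (0:ℝ) ⊆ Function.support fun s => (n (Set.Iic s))⁻¹ := by
      intro s hs
      simp only [Function.mem_support, ne_eq, ENNReal.inv_eq_zero]
      have h8 := (hnfin (-s) (by have := hs.2; linarith)).2
      rw [neg_neg] at h8
      exact h8.ne
    calc 0 < μ (Set.Ico (-(m:ℝ)-1) 0) := hm
    _ = (μ.restrict (Set.Ico (-(m:ℝ)-1) 0)) (Set.Ico (-(m:ℝ)-1) 0) := by
          rw [Measure.restrict_apply_self]
    _ ≤ (μ.restrict (Set.Ico (-(m:ℝ)-1) 0)) (Function.support fun s => (n (Set.Iic s))⁻¹) :=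
          measure_mono hsub
  have hV0 : 0 < V := lt_of_lt_of_eq hVG hcompat.symm
  -- the recursive sequence of levels
  have htotal : ∀ v : ℝ≥0∞, ∃ v',
      v < V → ((v < v' ∧ v' < V) ∧ Rre μ n v' ≤ Rre μ n v / 2) := by
    intro v
    by_cases hv : v < V
    · obtain ⟨v', h⟩ := step_exists hneg hpos hnfin hfinD hfinG hcompat hv
      exact ⟨v', fun _ => h⟩
    · exact ⟨0, fun h => absurd h hv⟩
  choose F hF using htotal
  set vs : ℕ → ℝ≥0∞ := fun k => F^[k] 0 with hvs
  have hvs_succ : ∀ k, vs (k+1) = F (vs k) := fun k => Function.iterate_succ_apply' F k 0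
  have hlt : ∀ k, vs k < V := by
    intro k
    induction k with
    | zero =>
        show F^[0] 0 < V
        rw [Function.iterate_zero_apply]
        exact hV0
    | succ k ih =>
        rw [hvs_succ]
        exact ((hF (vs k) ih).1).2
  have hmonov : ∀ k, vs k ≤ vs (k+1) := fun k => by
    rw [hvs_succ]; exact le_of_lt ((hF (vs k) (hlt k)).1).1
  have hhalf : ∀ k, Rre μ n (vs (k+1)) ≤ Rre μ n (vs k) / 2 := fun k => by
    rw [hvs_succ]; exact (hF (vs k) (hlt k)).2
  set yk : ℕ → ℝ := fun k => sInf (DinvSet μ n (vs k)) with hyk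
  set xk : ℕ → ℝ := fun k => sSup (GinvSet μ n (vs k)) with hxk
  have hDne : ∀ k, (DinvSet μ n (vs k)).Nonempty := fun k => DinvSet_nonempty (hlt k)
  have hGne : ∀ k, (GinvSet μ n (vs k)).Nonempty := fun k =>
    GinvSet_nonempty (by rw [← hcompat]; exact hlt k)
  have hyk0 : ∀ k, 0 ≤ yk k := fun k => le_csInf (hDne k) fun z hz => hz.1
  have hxk0 : ∀ k, xk k ≤ 0 := fun k => csSup_le (hGne k) fun z hz => hz.1
  have hykmono : Monotone yk := monotone_nat_of_le_succ fun k =>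
    csInf_le_csInf ⟨0, fun z hz => hz.1⟩ (hDne (k+1))
      (fun z hz => ⟨hz.1, lt_of_le_of_lt (hmonov k) hz.2⟩)
  have hxkanti : Antitone xk := antitone_nat_of_succ_le fun k =>
    csSup_le_csSup ⟨0, fun z hz => hz.1⟩ (hGne (k+1))
      (fun z hz => ⟨hz.1, lt_of_le_of_lt (hmonov k) hz.2⟩)
  -- pointwise bounds on the blocks
  have hWy : ∀ k, ∀ y ∈ Set.Ioo (yk k) (yk (k+1)),
      1 + (μ (Set.Ici y)).toReal - mubarGinv μ n (Dmu μ n y) ≤ Rre μ n (vs k) := by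
    intro k y hy
    have hDy : vs k < Dmu μ n y := Dmu_gt_of_gt (hDne k) hy.1
    have hterm1 : (μ (Set.Ici y)).toReal ≤ (μ (Set.Ici (yk k))).toReal :=
      ENNReal.toReal_mono (measure_ne_top μ _)
        (measure_mono (Ici_subset_Ici.mpr (le_of_lt hy.1)))
    have hterm2 : 1 - mubarGinv μ n (Dmu μ n y) ≤ (μ (Set.Iio (xk k))).toReal := by
      rw [mubarGinv]
      split_ifs with hne
      · have hsub : GinvSet μ n (Dmu μ n y) ⊆ GinvSet μ n (vs k) :=
          fun x hx => ⟨hx.1, lt_trans hDy hx.2⟩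
        have hle : sSup (GinvSet μ n (Dmu μ n y)) ≤ xk k :=
          csSup_le_csSup ⟨0, fun z hz => hz.1⟩ hne hsub
        have hps := prob_split (μ := μ) (sSup (GinvSet μ n (Dmu μ n y)))
        have heq : 1 - (μ (Set.Ici (sSup (GinvSet μ n (Dmu μ n y))))).toReal
            = (μ (Set.Iio (sSup (GinvSet μ n (Dmu μ n y))))).toReal := by linarith
        rw [heq]
        exact ENNReal.toReal_mono (measure_ne_top μ _) (measure_mono (Iio_subset_Iio hle))
      · simp only [sub_self]
        exact ENNReal.toReal_nonneg
    have hR : Rre μ n (vs k)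
        = (μ (Set.Ici (yk k))).toReal + (μ (Set.Iio (xk k))).toReal := rfl
    linarith
  have hWx : ∀ k, ∀ x ∈ Set.Ioo (xk (k+1)) (xk k),
      1 + mubarDinv μ n (Gmu μ n x) - (μ (Set.Ici x)).toReal ≤ Rre μ n (vs k) := by
    intro k x hx
    have hGx : vs k < Gmu μ n x := Gmu_gt_of_lt (hGne k) hx.2
    have hps := prob_split (μ := μ) x
    have hterm1 : (μ (Set.Iio x)).toReal ≤ (μ (Set.Iio (xk k))).toReal :=
      ENNReal.toReal_mono (measure_ne_top μ _) (measure_mono (Iio_subset_Iio (le_of_lt hx.2)))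
    have hterm2 : mubarDinv μ n (Gmu μ n x) ≤ (μ (Set.Ici (yk k))).toReal := by
      rw [mubarDinv]
      split_ifs with hne
      · have hsub : DinvSet μ n (Gmu μ n x) ⊆ DinvSet μ n (vs k) :=
          fun z hz => ⟨hz.1, lt_trans hGx hz.2⟩
        have hle : yk k ≤ sInf (DinvSet μ n (Gmu μ n x)) :=
          csInf_le_csInf ⟨0, fun z hz => hz.1⟩ hne hsub
        exact ENNReal.toReal_mono (measure_ne_top μ _)
          (measure_mono (Ici_subset_Ici.mpr hle))
      · exact ENNReal.toReal_nonneg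
    have hR : Rre μ n (vs k)
        = (μ (Set.Ici (yk k))).toReal + (μ (Set.Iio (xk k))).toReal := rfl
    linarith
  -- the block integrals
  have hyint : ∀ k, (ENNReal.ofReal (Rre μ n (vs k)))⁻¹ * μ (Set.Ioo (yk k) (yk (k+1)))
      ≤ ∫⁻ y in Set.Ioo (yk k) (yk (k+1)),
          (ENNReal.ofReal (1 + (μ (Set.Ici y)).toReal - mubarGinv μ n (Dmu μ n y)))⁻¹ ∂μ := by
    intro k
    calc (ENNReal.ofReal (Rre μ n (vs k)))⁻¹ * μ (Set.Ioo (yk k) (yk (k+1)))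
        = ∫⁻ _ in Set.Ioo (yk k) (yk (k+1)),
            (ENNReal.ofReal (Rre μ n (vs k)))⁻¹ ∂μ :=
          (MeasureTheory.setLIntegral_const _ _).symm
    _ ≤ _ := by
          refine MeasureTheory.lintegral_mono_ae
            ((MeasureTheory.ae_restrict_iff' measurableSet_Ioo).mpr
              (Filter.Eventually.of_forall fun y hy => ?_))
          exact ENNReal.inv_le_inv.mpr (ENNReal.ofReal_le_ofReal (hWy k y hy))
  have hxint : ∀ k, (ENNReal.ofReal (Rre μ n (vs k)))⁻¹ * μ (Set.Ioo (xk (k+1)) (xk k))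
      ≤ ∫⁻ x in Set.Ioo (xk (k+1)) (xk k),
          (ENNReal.ofReal (1 + mubarDinv μ n (Gmu μ n x) - (μ (Set.Ici x)).toReal))⁻¹ ∂μ := by
    intro k
    calc (ENNReal.ofReal (Rre μ n (vs k)))⁻¹ * μ (Set.Ioo (xk (k+1)) (xk k))
        = ∫⁻ _ in Set.Ioo (xk (k+1)) (xk k),
            (ENNReal.ofReal (Rre μ n (vs k)))⁻¹ ∂μ :=
          (MeasureTheory.setLIntegral_const _ _).symm
    _ ≤ _ := by
          refine MeasureTheory.lintegral_mono_ae
            ((MeasureTheory.ae_restrict_iff' measurableSet_Ioo).mpr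
              (Filter.Eventually.of_forall fun x hx => ?_))
          exact ENNReal.inv_le_inv.mpr (ENNReal.ofReal_le_ofReal (hWx k x hx))
  -- telescoping of the remaining mass
  have htel : ∀ k, Rre μ n (vs k)
      = ((μ (Set.Ico (yk k) (yk (k+1)))).toReal + (μ (Set.Ico (xk (k+1)) (xk k))).toReal)
        + Rre μ n (vs (k+1)) := by
    intro k
    have hd1 : Disjoint (Set.Ico (yk k) (yk (k+1))) (Set.Ici (yk (k+1))) :=
      Set.disjoint_left.mpr fun z hz hz2 => absurd hz2 (not_le.mpr hz.2)
    have hd2 : Disjoint (Set.Iio (xk (k+1))) (Set.Ico (xk (k+1)) (xk k)) :=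
      Set.disjoint_left.mpr fun z hz hz2 => absurd hz2.1 (not_le.mpr hz)
    have h1 : μ (Set.Ici (yk k))
        = μ (Set.Ico (yk k) (yk (k+1))) + μ (Set.Ici (yk (k+1))) := by
      rw [← measure_union hd1 measurableSet_Ici,
        Set.Ico_union_Ici_eq_Ici (hykmono (Nat.le_succ k))]
    have h2 : μ (Set.Iio (xk k))
        = μ (Set.Iio (xk (k+1))) + μ (Set.Ico (xk (k+1)) (xk k)) := by
      rw [← measure_union hd2 measurableSet_Ico,
        Set.Iio_union_Ico_eq_Iio (hxkanti (Nat.le_succ k))]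
    have e1 := congrArg ENNReal.toReal h1
    have e2 := congrArg ENNReal.toReal h2
    rw [ENNReal.toReal_add (measure_ne_top μ _) (measure_ne_top μ _)] at e1 e2
    have hRk : Rre μ n (vs k)
        = (μ (Set.Ici (yk k))).toReal + (μ (Set.Iio (xk k))).toReal := rfl
    have hRk1 : Rre μ n (vs (k+1))
        = (μ (Set.Ici (yk (k+1)))).toReal + (μ (Set.Iio (xk (k+1)))).toReal := rfl
    rw [hRk, hRk1, e1, e2]
    ring
  -- each block pair contributes at least 1/2
  have hk2 : ∀ k, (2:ℝ≥0∞)⁻¹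
      ≤ (∫⁻ y in Set.Ioo (yk k) (yk (k+1)),
          (ENNReal.ofReal (1 + (μ (Set.Ici y)).toReal - mubarGinv μ n (Dmu μ n y)))⁻¹ ∂μ)
        + ∫⁻ x in Set.Ioo (xk (k+1)) (xk k),
          (ENNReal.ofReal (1 + mubarDinv μ n (Gmu μ n x) - (μ (Set.Ici x)).toReal))⁻¹ ∂μ := by
    intro k
    have hRpos := Rre_pos (n := n) hpos (hlt k)
    have hBre : Rre μ n (vs k) / 2
        ≤ (μ (Set.Ico (yk k) (yk (k+1)))).toReal + (μ (Set.Ico (xk (k+1)) (xk k))).toReal := by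
      have ht := htel k
      have hh := hhalf k
      linarith
    have hIooIcoY : μ (Set.Ioo (yk k) (yk (k+1))) = μ (Set.Ico (yk k) (yk (k+1))) :=
      measure_congr MeasureTheory.Ioo_ae_eq_Ico
    have hIooIcoX : μ (Set.Ioo (xk (k+1)) (xk k)) = μ (Set.Ico (xk (k+1)) (xk k)) :=
      measure_congr MeasureTheory.Ioo_ae_eq_Ico
    have hofReal : ENNReal.ofReal (Rre μ n (vs k) / 2)
        ≤ μ (Set.Ioo (yk k) (yk (k+1))) + μ (Set.Ioo (xk (k+1)) (xk k)) := by
      rw [hIooIcoY, hIooIcoX]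
      calc ENNReal.ofReal (Rre μ n (vs k) / 2)
          ≤ ENNReal.ofReal ((μ (Set.Ico (yk k) (yk (k+1)))).toReal
            + (μ (Set.Ico (xk (k+1)) (xk k))).toReal) := ENNReal.ofReal_le_ofReal hBre
      _ = μ (Set.Ico (yk k) (yk (k+1))) + μ (Set.Ico (xk (k+1)) (xk k)) := by
            rw [ENNReal.ofReal_add ENNReal.toReal_nonneg ENNReal.toReal_nonneg,
              ENNReal.ofReal_toReal (measure_ne_top μ _),
              ENNReal.ofReal_toReal (measure_ne_top μ _)]
    have hc1 : (ENNReal.ofReal (Rre μ n (vs k)))⁻¹ * ENNReal.ofReal (Rre μ n (vs k) / 2)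
        = 2⁻¹ := by
      rw [ENNReal.ofReal_div_of_pos two_pos]
      have h2 : ENNReal.ofReal (2:ℝ) = (2:ℝ≥0∞) := by
        rw [ENNReal.ofReal_ofNat]
      rw [h2, div_eq_mul_inv, ← mul_assoc,
        ENNReal.inv_mul_cancel (ENNReal.ofReal_pos.mpr hRpos).ne' ENNReal.ofReal_ne_top,
        one_mul]
    calc (2:ℝ≥0∞)⁻¹
        = (ENNReal.ofReal (Rre μ n (vs k)))⁻¹ * ENNReal.ofReal (Rre μ n (vs k) / 2) :=
          hc1.symm
    _ ≤ (ENNReal.ofReal (Rre μ n (vs k)))⁻¹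
          * (μ (Set.Ioo (yk k) (yk (k+1))) + μ (Set.Ioo (xk (k+1)) (xk k))) :=
          mul_le_mul_right hofReal _
    _ = (ENNReal.ofReal (Rre μ n (vs k)))⁻¹ * μ (Set.Ioo (yk k) (yk (k+1)))
          + (ENNReal.ofReal (Rre μ n (vs k)))⁻¹ * μ (Set.Ioo (xk (k+1)) (xk k)) := by
          rw [mul_add]
    _ ≤ _ := add_le_add (hyint k) (hxint k)
  -- summation over blocks
  have hdY : ∀ a b : ℕ, a < b →
      Disjoint (Set.Ioo (yk a) (yk (a+1))) (Set.Ioo (yk b) (yk (b+1))) := by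
    intro a b hab
    refine Set.disjoint_left.mpr fun z hz hz2 => ?_
    have h1 : yk (a+1) ≤ yk b := hykmono hab
    have h2 := hz.2
    have h3 := hz2.1
    linarith
  have hdX : ∀ a b : ℕ, a < b →
      Disjoint (Set.Ioo (xk (a+1)) (xk a)) (Set.Ioo (xk (b+1)) (xk b)) := by
    intro a b hab
    refine Set.disjoint_left.mpr fun z hz hz2 => ?_
    have h1 : xk b ≤ xk (a+1) := hxkanti hab
    have h2 := hz.1
    have h3 := hz2.2
    linarith
  have hIYsum : ∀ m : ℕ, (∑ k ∈ Finset.range m, ∫⁻ y in Set.Ioo (yk k) (yk (k+1)),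
      (ENNReal.ofReal (1 + (μ (Set.Ici y)).toReal - mubarGinv μ n (Dmu μ n y)))⁻¹ ∂μ)
      ≤ Kp := by
    intro m
    have hd : (↑(Finset.range m) : Set ℕ).PairwiseDisjoint
        (fun k => Set.Ioo (yk k) (yk (k+1))) := by
      intro a _ b _ hab
      rcases hab.lt_or_gt with h | h
      · exact hdY a b h
      · exact (hdY b a h).symm
    have heq := MeasureTheory.lintegral_biUnion_finset (μ := μ) hd
      (fun b _ => measurableSet_Ioo)
      (fun y => (ENNReal.ofReal (1 + (μ (Set.Ici y)).toReal
        - mubarGinv μ n (Dmu μ n y)))⁻¹)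
    rw [← heq]
    refine MeasureTheory.lintegral_mono_set ?_
    intro z hz
    obtain ⟨k, _, hzk⟩ := Set.mem_iUnion₂.mp hz
    exact lt_of_le_of_lt (hyk0 k) hzk.1
  have hIXsum : ∀ m : ℕ, (∑ k ∈ Finset.range m, ∫⁻ x in Set.Ioo (xk (k+1)) (xk k),
      (ENNReal.ofReal (1 + mubarDinv μ n (Gmu μ n x) - (μ (Set.Ici x)).toReal))⁻¹ ∂μ)
      ≤ Km := by
    intro m
    have hd : (↑(Finset.range m) : Set ℕ).PairwiseDisjoint
        (fun k => Set.Ioo (xk (k+1)) (xk k)) := by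
      intro a _ b _ hab
      rcases hab.lt_or_gt with h | h
      · exact hdX a b h
      · exact (hdX b a h).symm
    have heq := MeasureTheory.lintegral_biUnion_finset (μ := μ) hd
      (fun b _ => measurableSet_Ioo)
      (fun x => (ENNReal.ofReal (1 + mubarDinv μ n (Gmu μ n x)
        - (μ (Set.Ici x)).toReal))⁻¹)
    rw [← heq]
    refine MeasureTheory.lintegral_mono_set ?_
    intro z hz
    obtain ⟨k, _, hzk⟩ := Set.mem_iUnion₂.mp hz
    exact lt_of_lt_of_le hzk.2 (hxk0 k)
  have hsum : ∀ m : ℕ, (m : ℝ≥0∞) * 2⁻¹ ≤ Kp + Km := by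
    intro m
    calc (m : ℝ≥0∞) * 2⁻¹ = ∑ _k ∈ Finset.range m, (2:ℝ≥0∞)⁻¹ := by
          rw [Finset.sum_const, Finset.card_range, nsmul_eq_mul]
    _ ≤ ∑ k ∈ Finset.range m,
          ((∫⁻ y in Set.Ioo (yk k) (yk (k+1)),
            (ENNReal.ofReal (1 + (μ (Set.Ici y)).toReal - mubarGinv μ n (Dmu μ n y)))⁻¹ ∂μ)
          + ∫⁻ x in Set.Ioo (xk (k+1)) (xk k),
            (ENNReal.ofReal (1 + mubarDinv μ n (Gmu μ n x) - (μ (Set.Ici x)).toReal))⁻¹ ∂μ) :=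
          Finset.sum_le_sum fun k _ => hk2 k
    _ = (∑ k ∈ Finset.range m, ∫⁻ y in Set.Ioo (yk k) (yk (k+1)),
            (ENNReal.ofReal (1 + (μ (Set.Ici y)).toReal - mubarGinv μ n (Dmu μ n y)))⁻¹ ∂μ)
          + ∑ k ∈ Finset.range m, ∫⁻ x in Set.Ioo (xk (k+1)) (xk k),
            (ENNReal.ofReal (1 + mubarDinv μ n (Gmu μ n x) - (μ (Set.Ici x)).toReal))⁻¹ ∂μ :=
          Finset.sum_add_distrib
    _ ≤ Kp + Km := add_le_add (hIYsum m) (hIXsum m)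
  by_contra hK
  have h2K : (2:ℝ≥0∞) * (Kp + Km) ≠ ⊤ := ENNReal.mul_ne_top (by norm_num) hK
  have hall : ∀ m : ℕ, (m : ℝ≥0∞) ≤ 2 * (Kp + Km) := by
    intro m
    calc (m:ℝ≥0∞) = (m * 2⁻¹) * 2 := by
          rw [mul_assoc, ENNReal.inv_mul_cancel (by norm_num) (by norm_num), mul_one]
    _ ≤ (Kp + Km) * 2 := mul_le_mul_left (hsum m) 2
    _ = 2 * (Kp + Km) := mul_comm _ _
  have htop : (⊤:ℝ≥0∞) ≤ 2 * (Kp + Km) := by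
    rw [← ENNReal.iSup_natCast]
    exact iSup_le hall
  exact h2K (top_le_iff.mp htop)

end BlocksMain
section Final

open Set MeasureTheory Filter

variable {μ n : MeasureTheory.Measure ℝ}

lemma nPhiPlus_anti : Antitone (nPhiPlus μ n) := by
  intro a b hab
  rw [nPhiPlus, nPhiPlus]
  by_cases hbne : (phiPlusSet μ n b).Nonempty
  · have hsub : phiPlusSet μ n b ⊆ phiPlusSet μ n a := fun y hy =>
      ⟨hy.1, le_trans (ENNReal.ofReal_le_ofReal hab) hy.2⟩
    rw [if_pos hbne, if_pos (hbne.mono hsub)]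
    have h2 : phiPlus μ n a ≤ phiPlus μ n b :=
      csInf_le_csInf ⟨0, fun z hz => hz.1⟩ hbne hsub
    exact measure_mono (Ici_subset_Ici.mpr h2)
  · rw [if_neg hbne]
    exact zero_le

lemma nPhiMinus_anti : Antitone (nPhiMinus μ n) := by
  intro a b hab
  rw [nPhiMinus, nPhiMinus]
  by_cases hbne : (phiMinusSet μ n b).Nonempty
  · have hsub : phiMinusSet μ n b ⊆ phiMinusSet μ n a := fun y hy =>
      ⟨hy.1, le_trans (ENNReal.ofReal_le_ofReal hab) hy.2⟩
    rw [if_pos hbne, if_pos (hbne.mono hsub)]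
    have h2 : phiMinus μ n a ≤ phiMinus μ n b :=
      csInf_le_csInf ⟨0, fun z hz => hz.1⟩ hbne hsub
    exact measure_mono (Iic_subset_Iic.mpr (neg_le_neg h2))
  · rw [if_neg hbne]
    exact zero_le

lemma Dmu_le_two_psiPlus [MeasureTheory.IsProbabilityMeasure μ] (y : ℝ) :
    Dmu μ n y ≤ 2 * psiPlus μ n y := by
  have hpoint : ∀ s : ℝ, (n (Set.Ici s))⁻¹ ≤ 2 * psiPlusIntegrand μ n s := by
    intro s
    rw [psiPlusIntegrand]
    have hW : ENNReal.ofReal (1 + (μ (Set.Ici s)).toReal - mubarGinv μ n (Dmu μ n s))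
        ≤ 2 := by
      calc ENNReal.ofReal (1 + (μ (Set.Ici s)).toReal - mubarGinv μ n (Dmu μ n s))
          ≤ ENNReal.ofReal 2 := by
            refine ENNReal.ofReal_le_ofReal ?_
            have h1 : (μ (Set.Ici s)).toReal ≤ 1 :=
              ENNReal.toReal_mono ENNReal.one_ne_top MeasureTheory.prob_le_one
            have h2 : 0 ≤ mubarGinv μ n (Dmu μ n s) := mubarGinv_nonneg _
            linarith
      _ = 2 := by rw [ENNReal.ofReal_ofNat]
    have h3 : (n (Set.Ici s) * 2)⁻¹
        ≤ (n (Set.Ici s) * ENNReal.ofReal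
            (1 + (μ (Set.Ici s)).toReal - mubarGinv μ n (Dmu μ n s)))⁻¹ :=
      ENNReal.inv_le_inv.mpr (mul_le_mul_right hW _)
    calc (n (Set.Ici s))⁻¹ = 2 * 2⁻¹ * (n (Set.Ici s))⁻¹ := by
          rw [ENNReal.mul_inv_cancel (by norm_num) (by norm_num), one_mul]
    _ = 2 * ((n (Set.Ici s))⁻¹ * 2⁻¹) := by ring
    _ = 2 * (n (Set.Ici s) * 2)⁻¹ := by
          rw [ENNReal.mul_inv (Or.inr (by norm_num)) (Or.inr (by norm_num))]
    _ ≤ 2 * (n (Set.Ici s) * ENNReal.ofReal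
            (1 + (μ (Set.Ici s)).toReal - mubarGinv μ n (Dmu μ n s)))⁻¹ :=
          mul_le_mul_right h3 _
  calc Dmu μ n y ≤ ∫⁻ s in Set.Icc (0:ℝ) y, 2 * psiPlusIntegrand μ n s ∂μ :=
        MeasureTheory.lintegral_mono fun s => hpoint s
  _ = 2 * psiPlus μ n y := by
        rw [psiPlus, MeasureTheory.lintegral_const_mul 2 meas_pIplus]

lemma Gmu_le_two_psiMinus [MeasureTheory.IsProbabilityMeasure μ] (x : ℝ) :
    Gmu μ n x ≤ 2 * psiMinus μ n (-x) := by
  have hpoint : ∀ s : ℝ, (n (Set.Iic s))⁻¹ ≤ 2 * psiMinusIntegrand μ n s := by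
    intro s
    rw [psiMinusIntegrand]
    have hW : ENNReal.ofReal (1 + mubarDinv μ n (Gmu μ n s) - (μ (Set.Ici s)).toReal)
        ≤ 2 := by
      calc ENNReal.ofReal (1 + mubarDinv μ n (Gmu μ n s) - (μ (Set.Ici s)).toReal)
          ≤ ENNReal.ofReal 2 := by
            refine ENNReal.ofReal_le_ofReal ?_
            have h1 : mubarDinv μ n (Gmu μ n s) ≤ 1 := mubarDinv_le_one _
            have h2 : 0 ≤ (μ (Set.Ici s)).toReal := ENNReal.toReal_nonneg
            linarith
      _ = 2 := by rw [ENNReal.ofReal_ofNat]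
    have h3 : (n (Set.Iic s) * 2)⁻¹
        ≤ (n (Set.Iic s) * ENNReal.ofReal
            (1 + mubarDinv μ n (Gmu μ n s) - (μ (Set.Ici s)).toReal))⁻¹ :=
      ENNReal.inv_le_inv.mpr (mul_le_mul_right hW _)
    calc (n (Set.Iic s))⁻¹ = 2 * 2⁻¹ * (n (Set.Iic s))⁻¹ := by
          rw [ENNReal.mul_inv_cancel (by norm_num) (by norm_num), one_mul]
    _ = 2 * ((n (Set.Iic s))⁻¹ * 2⁻¹) := by ring
    _ = 2 * (n (Set.Iic s) * 2)⁻¹ := by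
          rw [ENNReal.mul_inv (Or.inr (by norm_num)) (Or.inr (by norm_num))]
    _ ≤ 2 * (n (Set.Iic s) * ENNReal.ofReal
            (1 + mubarDinv μ n (Gmu μ n s) - (μ (Set.Ici s)).toReal))⁻¹ :=
          mul_le_mul_right h3 _
  calc Gmu μ n x ≤ ∫⁻ s in Set.Icc x (0:ℝ), 2 * psiMinusIntegrand μ n s ∂μ :=
        MeasureTheory.lintegral_mono fun s => hpoint s
  _ = 2 * psiMinus μ n (-x) := by
        rw [psiMinus, neg_neg, MeasureTheory.lintegral_const_mul 2 meas_pIminus]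

end Final

/-- The total intensity diverges:
`∫₀^∞ [n((−∞,−φ₋(s)]) + n([φ₊(s),∞))] ds = ∞`, the analytic fact guaranteeing that
the two-sided stopping time is almost surely finite. -/
theorem totalIntensityDiverges
    (μ n : MeasureTheory.Measure ℝ) [MeasureTheory.IsProbabilityMeasure μ]
    (hatomless : ∀ x : ℝ, μ {x} = 0)
    (hneg : 0 < μ (Set.Iio (0 : ℝ))) (hpos : 0 < μ (Set.Ioi (0 : ℝ)))
    (hnfin : ∀ s : ℝ, 0 < s → n (Set.Ici s) < ⊤ ∧ n (Set.Iic (-s)) < ⊤)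
    (hnsupp : ∀ x ∈ measSupport μ, 0 < n (Set.Iic x) ∧ 0 < n (Set.Ici x))
    (hcompat : (⨆ y : ℝ, Dmu μ n y) = (⨆ x : ℝ, Gmu μ n x))
    :
    ∫⁻ s in Set.Ioi (0 : ℝ), (nPhiMinus μ n s + nPhiPlus μ n s) = ⊤ := by
  haveI : MeasureTheory.NullSingletonClass μ := ⟨hatomless⟩
  by_cases hp : ∃ y : ℝ, psiPlus μ n y = ⊤
  · exact easy_plus hpos hnsupp hp
  by_cases hm : ∃ z : ℝ, psiMinus μ n z = ⊤
  · exact easy_minus hneg hnsupp hm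
  push_neg at hp hm
  have hfinD : ∀ y : ℝ, Dmu μ n y ≠ ⊤ := by
    intro y hcon
    have h2 : 2 * psiPlus μ n y = ⊤ :=
      top_le_iff.mp (hcon ▸ Dmu_le_two_psiPlus y)
    rcases ENNReal.mul_eq_top.mp h2 with ⟨_, h⟩ | ⟨h, _⟩
    · exact hp y h
    · exact absurd h (by norm_num)
  have hfinG : ∀ x : ℝ, Gmu μ n x ≠ ⊤ := by
    intro x hcon
    have h2 : 2 * psiMinus μ n (-x) = ⊤ :=
      top_le_iff.mp (hcon ▸ Gmu_le_two_psiMinus x)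
    rcases ENNReal.mul_eq_top.mp h2 with ⟨_, h⟩ | ⟨h, _⟩
    · exact hm (-x) h
    · exact absurd h (by norm_num)
  have hJp : (∫⁻ l in domF (kplus μ n), nPhiPlus μ n l)
      = ∫⁻ y in Set.Ioi 0,
          (ENNReal.ofReal (1 + (μ (Set.Ici y)).toReal - mubarGinv μ n (Dmu μ n y)))⁻¹ ∂μ :=
    (Jplus_eq hp).trans (Kplus_congr hnfin hnsupp)
  have hJm : (∫⁻ l in domF (kminus μ n), nPhiMinus μ n l)
      = ∫⁻ x in Set.Iio 0,
          (ENNReal.ofReal (1 + mubarDinv μ n (Gmu μ n x) - (μ (Set.Ici x)).toReal))⁻¹ ∂μ :=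
    (Jminus_eq hm).trans (Kminus_congr hnfin hnsupp)
  refine top_le_iff.mp ?_
  calc (⊤:ℝ≥0∞)
      = (∫⁻ y in Set.Ioi 0,
          (ENNReal.ofReal (1 + (μ (Set.Ici y)).toReal - mubarGinv μ n (Dmu μ n y)))⁻¹ ∂μ)
        + ∫⁻ x in Set.Iio 0,
          (ENNReal.ofReal (1 + mubarDinv μ n (Gmu μ n x) - (μ (Set.Ici x)).toReal))⁻¹ ∂μ :=
        (blocks_diverge hneg hpos hnfin hfinD hfinG hcompat).symm
  _ = (∫⁻ l in domF (kplus μ n), nPhiPlus μ n l)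
        + ∫⁻ l in domF (kminus μ n), nPhiMinus μ n l := by
        rw [hJp, hJm]
  _ ≤ (∫⁻ l in Set.Ioi (0:ℝ), nPhiPlus μ n l)
        + ∫⁻ l in Set.Ioi (0:ℝ), nPhiMinus μ n l :=
        add_le_add (MeasureTheory.lintegral_mono_set fun l hl => hl.1)
          (MeasureTheory.lintegral_mono_set fun l hl => hl.1)
  _ = ∫⁻ s in Set.Ioi (0 : ℝ), (nPhiMinus μ n s + nPhiPlus μ n s) := by
        rw [add_comm]
        exact (MeasureTheory.lintegral_add_left nPhiMinus_anti.measurable _).symm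
end
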